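/- arXiv:1210.2129 — 15 statements merged into one kernel-verified Lean document; each statement's English description precedes it below -/
import Mathlib

section
/- Let m ≥ 1, let n ≥ 1, let a_0, …, a_{n−1} ∈ ℂ, let p(t) = t^n + a_{n−1}t^{n−1} + ⋯ + a_0 (so a_n = 1), and let R = ℂ[t, t^{−1}, u]/(u^m − p(t)). Then for every i ∈ ℤ one has, in the quotient Ω¹_{R/ℂ}/dR, the relation ((m+1)n + im)·[t^{n+i−1} u dt] = − Σ_{j=0}^{n−1} ((m+1)j + mi)·a_j·[t^{i+j−1} u dt], where [ω] denotes the class of ω ∈ Ω¹_{R/ℂ} modulo exact differentials. -/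
/-!
Since `u ^ m = P` with `P` the image of `p(t)`, we have `u · dP = m u^m du`, hence
`m · d(t^i u^{m+1}) = (m+1) t^i u · dP + m i t^{i-1} u P · dt`.
Expanding `P = Σ a_j t^j` and `dP = Σ j a_j t^{j-1} dt` (with `a_n = 1`) turns the right-hand side
into `Σ_j ((m+1) j + m i) a_j t^{i+j-1} u dt`, which is therefore exact.
-/

open Polynomial LaurentPolynomial

noncomputable section

/-- `p(t) = tⁿ + a_{n−1}t^{n−1} + ⋯ + a₁t + a₀` as a Laurent polynomial in `t`. -/
def pPoly (n : ℕ) (a : ℕ → ℂ) : LaurentPolynomial ℂ :=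
  T (n : ℤ) + ∑ j ∈ Finset.range n, LaurentPolynomial.C (a j) * T (j : ℤ)

/-- `u^m − p(t)` as a polynomial in `u` over `ℂ[t, t⁻¹]`. -/
def qPoly (m n : ℕ) (a : ℕ → ℂ) : Polynomial (LaurentPolynomial ℂ) :=
  Polynomial.X ^ m - Polynomial.C (pPoly n a)

/-- The subspace `dR ⊆ Ω¹_{R/ℂ}` of exact differentials, where
`R = ℂ[t,t⁻¹,u]/(u^m − p(t)) = AdjoinRoot (qPoly m n a)`. -/
def exactDiffs (m n : ℕ) (a : ℕ → ℂ) :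
    Submodule ℂ (KaehlerDifferential ℂ (AdjoinRoot (qPoly m n a))) :=
  LinearMap.range (KaehlerDifferential.D ℂ (AdjoinRoot (qPoly m n a))).toLinearMap

/-- The residue class of the Kähler differential `f dg` in `Ω¹_{R/ℂ}/dR`. -/
def diffClass (m n : ℕ) (a : ℕ → ℂ) (f g : AdjoinRoot (qPoly m n a)) :
    KaehlerDifferential ℂ (AdjoinRoot (qPoly m n a)) ⧸ exactDiffs m n a :=
  Submodule.Quotient.mk (f • KaehlerDifferential.D ℂ (AdjoinRoot (qPoly m n a)) g)

open Finset

namespace Derivation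

variable {k A M : Type*} [CommRing k] [CommRing A] [Algebra k A] [AddCommGroup M] [Module A M]
  [Module k M] (D : Derivation k A M)

theorem leibniz_units_zpow (t : Aˣ) (n : ℤ) : D ↑(t ^ n) = n • (↑(t ^ (n - 1)) : A) • D ↑t := by
  set e : ℤ → M := fun n ↦ D ↑(t ^ n) - n • (↑(t ^ (n - 1)) : A) • D ↑t
  have step (n : ℤ) : e (n + 1) = t • e n := by
    have split : ((t ^ (n + 1) : Aˣ) : A) = ↑(t ^ n) * t := by rw [zpow_add_one, Units.val_mul]
    have merge : (t : A) * ↑(t ^ (n - 1)) = ↑(t ^ n) := by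
      rw [← Units.val_mul, mul_self_zpow, sub_add_cancel]
    simp only [e, add_sub_cancel_right, split, leibniz, Units.smul_def, smul_sub,
      smul_comm (t : A) (n : ℤ), smul_smul, merge, add_smul, one_smul]
    abel
  suffices e n = 0 from sub_eq_zero.mp this
  induction n using Int.induction_on with
  | zero => simp [e]
  | succ n ih => rw [step, ih, smul_zero]
  | pred n ih => rwa [← smul_eq_zero_iff_eq t, ← step, sub_add_cancel]

theorem smul_leibniz_pow_self (u : A) (m : ℕ) : u • D (u ^ m) = m • u ^ m • D u := by
  cases m with
  | zero => simp
  | succ m => rw [leibniz_pow, smul_comm, smul_smul, Nat.add_sub_cancel, ← pow_succ']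

theorem nsmul_leibniz_mul_pow_succ (a u : A) (m : ℕ) :
    m • D (a * u ^ (m + 1)) = (m + 1) • (a * u) • D (u ^ m) + m • u ^ (m + 1) • D a := by
  rw [leibniz, leibniz_pow, Nat.add_sub_cancel, mul_smul, smul_leibniz_pow_self, smul_add,
    smul_comm m a, smul_comm m (m + 1), smul_comm a (m + 1)]

variable [IsScalarTower k A M]

theorem smul_leibniz_units_zpow_mul_pow_succ (t : Aˣ) (u : A) (m N : ℕ) (c : ℕ → k)
    (hu : u ^ m = ∑ j ∈ range N, c j • (↑(t ^ (j : ℤ)) : A)) (i : ℤ) :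
    (m : k) • D (↑(t ^ i) * u ^ (m + 1)) =
      ∑ j ∈ range N, ((((m : k) + 1) * j + m * i) * c j) • (↑(t ^ (i + j - 1)) * u) • D ↑t := by
  have hDu : (↑(t ^ i) * u) • D (u ^ m) =
      ∑ j ∈ range N, ((j : k) * c j) • (↑(t ^ (i + j - 1)) * u) • D ↑t := by
    rw [hu, map_sum, smul_sum]
    refine sum_congr rfl fun j _ ↦ ?_
    rw [map_smul, leibniz_units_zpow, add_sub_assoc, zpow_add, Units.val_mul]
    module
  have hDt : u ^ (m + 1) • D ↑(t ^ i) =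
      ∑ j ∈ range N, ((i : k) * c j) • (↑(t ^ (i + j - 1)) * u) • D ↑t := by
    rw [leibniz_units_zpow, pow_succ, hu, sum_mul, sum_smul]
    refine sum_congr rfl fun j _ ↦ ?_
    rw [add_sub_right_comm, zpow_add, Units.val_mul, smul_mul_assoc, smul_assoc,
      ← Int.cast_smul_eq_zsmul k]
    module
  rw [Nat.cast_smul_eq_nsmul, nsmul_leibniz_mul_pow_succ, hDu, hDt, smul_sum, smul_sum,
    ← sum_add_distrib]
  refine sum_congr rfl fun j _ ↦ ?_
  module

end Derivation

theorem LaurentPolynomial.map_T_eq_units_zpow {R S F : Type*} [CommSemiring R] [Monoid S]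
    [FunLike F R[T;T⁻¹] S] [MonoidHomClass F R[T;T⁻¹] S] (φ : F) (t : Sˣ) (ht : φ (T 1) = t)
    (n : ℤ) : φ (T n) = ↑(t ^ n) := by
  induction n using Int.induction_on with
  | zero => rw [T_zero, map_one, zpow_zero, Units.val_one]
  | succ n ih => rw [T_add, map_mul, ih, ht, zpow_add_one, Units.val_mul]
  | pred n ih =>
    rw [← Units.mul_left_inj t, ← ht, ← map_mul, ← T_add, ht, ← Units.val_mul, ← zpow_add_one,
      sub_add_cancel, ih]

theorem root_qPoly_pow_eq_sum (m n : ℕ) (a : ℕ → ℂ) :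
    AdjoinRoot.root (qPoly m n a) ^ m = ∑ j ∈ range (n + 1),
      Function.update a n 1 j • AdjoinRoot.of (qPoly m n a) (T j) := by
  have h : (X ^ m - Polynomial.C (pPoly n a)).eval₂ (AdjoinRoot.of (qPoly m n a))
      (AdjoinRoot.root (qPoly m n a)) = 0 := AdjoinRoot.eval₂_root _
  rw [eval₂_sub, eval₂_X_pow, Polynomial.eval₂_C, sub_eq_zero] at h
  rw [h, pPoly, sum_range_succ, Function.update_self, one_smul, add_comm, map_add, map_sum]
  congr 1
  refine sum_congr rfl fun j hj ↦ ?_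
  rw [Function.update_of_ne (mem_range.mp hj).ne, map_mul, Algebra.smul_def]
  rfl

theorem stmt_1_general (m n : ℕ) (a : ℕ → ℂ) :
    ∀ i : ℤ,
      ((((m : ℂ) + 1) * (n : ℂ) + (i : ℂ) * (m : ℂ)) •
          diffClass m n a
            (AdjoinRoot.of (qPoly m n a) (T ((n : ℤ) + i - 1)) * AdjoinRoot.root (qPoly m n a))
            (AdjoinRoot.of (qPoly m n a) (T 1)))
        = -∑ j ∈ Finset.range n,
            (((((m : ℂ) + 1) * (j : ℂ) + (m : ℂ) * (i : ℂ)) * a j) •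
              diffClass m n a
                (AdjoinRoot.of (qPoly m n a) (T (i + (j : ℤ) - 1)) *
                  AdjoinRoot.root (qPoly m n a))
                (AdjoinRoot.of (qPoly m n a) (T 1))) := by
  intro i
  let t := Units.map (AdjoinRoot.of (qPoly m n a)).toMonoidHom (isUnit_T 1).unit
  have hT (k : ℤ) : AdjoinRoot.of (qPoly m n a) (T k) = ↑(t ^ k) :=
    map_T_eq_units_zpow _ t rfl k
  have hu := root_qPoly_pow_eq_sum m n a
  simp only [hT] at hu
  have key :=
    (KaehlerDifferential.D ℂ _).smul_leibniz_units_zpow_mul_pow_succ t _ m (n + 1) _ hu i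
  have hexact (x : AdjoinRoot (qPoly m n a)) :
      (m : ℂ) • KaehlerDifferential.D ℂ _ x ∈ exactDiffs m n a :=
    Submodule.smul_mem _ _ (LinearMap.mem_range_self _ x)
  rw [sum_range_succ, Function.update_self, mul_one] at key
  apply_fun (exactDiffs m n a).mkQ at key
  rw [Submodule.mkQ_apply, (Submodule.Quotient.mk_eq_zero _).mpr (hexact _), map_add,
    map_sum] at key
  simp only [diffClass, ← Submodule.mkQ_apply, hT, zpow_one, eq_neg_iff_add_eq_zero, ← map_smul]
  rw [key, add_comm (n : ℤ), mul_comm (i : ℂ), add_comm]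
  refine congrArg (· + _) (sum_congr rfl fun j hj ↦ ?_)
  rw [Function.update_of_ne (mem_range.mp hj).ne]

/-- for `m, n ≥ 1`, `p(t) = tⁿ + a_{n−1}t^{n−1} + ⋯ + a₀` and
`R = ℂ[t,t⁻¹,u]/(u^m − p(t))`, one has, for every `i ∈ ℤ`, the relation
`((m+1)n + im)·[t^{n+i−1}u dt] = −Σ_{j=0}^{n−1} ((m+1)j + mi)·a_j·[t^{i+j−1}u dt]`
in `Ω¹_{R/ℂ}/dR`. Here `t` is the image of `T 1` and `u` is the adjoined root. -/
theorem stmt_1 (m n : ℕ) (hm : 1 ≤ m) (hn : 1 ≤ n) (a : ℕ → ℂ) :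
    ∀ i : ℤ,
      ((((m : ℂ) + 1) * (n : ℂ) + (i : ℂ) * (m : ℂ)) •
          diffClass m n a
            (AdjoinRoot.of (qPoly m n a) (T ((n : ℤ) + i - 1)) * AdjoinRoot.root (qPoly m n a))
            (AdjoinRoot.of (qPoly m n a) (T 1)))
        = -∑ j ∈ Finset.range n,
            (((((m : ℂ) + 1) * (j : ℂ) + (m : ℂ) * (i : ℂ)) * a j) •
              diffClass m n a
                (AdjoinRoot.of (qPoly m n a) (T (i + (j : ℤ) - 1)) *
                  AdjoinRoot.root (qPoly m n a))
                (AdjoinRoot.of (qPoly m n a) (T 1))) :=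
  stmt_1_general m n a

end
end

section
/- Fix real numbers p₀, p₁, p₂, p₃ and let Q_k ∈ ℝ[c] be defined by Q_0 = p₀, Q_1 = p₁, Q_2 = p₂, Q_3 = p₃ and (2k−2)·Q_k = 4(k−4)·c·Q_{k−2} − 2(k−7)·Q_{k−4} for k ≥ 4. Then the formal power series F(z) = Σ_{k≥0} Q_k z^k, with coefficients in the polynomial ring ℝ[c], satisfies the differential equation (z⁵ − 2c z³ + z)·(dF/dz) − (3z⁴ − 4c z² + 1)·F = 2(p₃ + c·p₁) z³ + p₂ z² + (4c z² − 1)·p₀, where dF/dz is the formal derivative of power series in z. -/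
open Polynomial PowerSeries

/-!
With `θ = X d/dX`, which multiplies the `k`-th coefficient by `k`, the operator factors as
`X⁴(θ - 3) - 2cX²(θ - 2) + (θ - 1)`. Its `k`-th coefficient on `F = Σ Q_k X^k` is therefore
`(k - 1)Q_k - 2c(k - 4)Q_{k-2} + (k - 7)Q_{k-4}`, which is half of the recurrence for `k ≥ 4`;
the coefficients of degree `k < 4` make up the right-hand side.
-/

namespace PowerSeries

variable {R : Type*} [CommRing R]

theorem coeff_X_mul_derivative_sub_C_mul (f : R⟦X⟧) (m : R) (n : ℕ) :
    coeff n (X * d⁄dX R f - C m * f) = (n - m) * coeff n f := by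
  rcases n with _ | n
  · simp
  · rw [map_sub, coeff_succ_X_mul, coeff_derivative, coeff_C_mul]
    push_cast
    ring

theorem coeff_mul_derivative_sub_mul (c : R) (f : R⟦X⟧) (n : ℕ) :
    coeff n ((X ^ 5 - 2 * C c * X ^ 3 + X) * d⁄dX R f - (3 * X ^ 4 - 4 * C c * X ^ 2 + 1) * f) =
      (n - 1) * coeff n f
        - (if 2 ≤ n then 2 * c * ((n : R) - 4) * coeff (n - 2) f else 0)
        + (if 4 ≤ n then ((n : R) - 7) * coeff (n - 4) f else 0) := by
  have euler_split :
      (X ^ 5 - 2 * C c * X ^ 3 + X) * d⁄dX R f - (3 * X ^ 4 - 4 * C c * X ^ 2 + 1) * f =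
        X ^ 4 * (X * d⁄dX R f - C 3 * f) - C (2 * c) * (X ^ 2 * (X * d⁄dX R f - C 2 * f))
          + (X * d⁄dX R f - C 1 * f) := by
    simp only [map_mul, map_ofNat, map_one]
    ring
  rw [euler_split, map_add, map_sub, coeff_C_mul, coeff_X_pow_mul', coeff_X_pow_mul']
  simp only [coeff_X_mul_derivative_sub_C_mul]
  split_ifs with h2 h4 h4 <;> first | omega | (push_cast [h2, h4]; ring)

end PowerSeries

/-- with `Q_k ∈ ℝ[c]` given by `Q₀ = p₀, Q₁ = p₁, Q₂ = p₂, Q₃ = p₃` and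
`(2k−2)Q_k = 4(k−4)cQ_{k−2} − 2(k−7)Q_{k−4}` for `k ≥ 4`, the formal power series
`F(z) = Σ_{k≥0} Q_k z^k` over `ℝ[c]` satisfies
`(z⁵ − 2cz³ + z)F' − (3z⁴ − 4cz² + 1)F = 2(p₃ + cp₁)z³ + p₂z² + (4cz² − 1)p₀`. -/
theorem stmt_2 (p₀ p₁ p₂ p₃ : ℝ) (Q : ℕ → Polynomial ℝ)
    (h0 : Q 0 = Polynomial.C p₀) (h1 : Q 1 = Polynomial.C p₁)
    (h2 : Q 2 = Polynomial.C p₂) (h3 : Q 3 = Polynomial.C p₃)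
    (hrec : ∀ k : ℕ, 4 ≤ k →
      Polynomial.C (2 * (k : ℝ) - 2) * Q k =
        Polynomial.C (4 * ((k : ℝ) - 4)) * Polynomial.X * Q (k - 2)
          - Polynomial.C (2 * ((k : ℝ) - 7)) * Q (k - 4)) :
    (PowerSeries.X ^ 5
        - 2 * PowerSeries.C (R := Polynomial ℝ) Polynomial.X * PowerSeries.X ^ 3
        + PowerSeries.X) * (d⁄dX (Polynomial ℝ) (PowerSeries.mk fun k => Q k))
      - (3 * PowerSeries.X ^ 4
          - 4 * PowerSeries.C (R := Polynomial ℝ) Polynomial.X * PowerSeries.X ^ 2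
          + 1) * (PowerSeries.mk fun k => Q k)
    = 2 * (PowerSeries.C (R := Polynomial ℝ) (Polynomial.C p₃)
          + PowerSeries.C (R := Polynomial ℝ) Polynomial.X *
              PowerSeries.C (R := Polynomial ℝ) (Polynomial.C p₁)) * PowerSeries.X ^ 3
      + PowerSeries.C (R := Polynomial ℝ) (Polynomial.C p₂) * PowerSeries.X ^ 2
      + (4 * PowerSeries.C (R := Polynomial ℝ) Polynomial.X * PowerSeries.X ^ 2 - 1) *
          PowerSeries.C (R := Polynomial ℝ) (Polynomial.C p₀) := by
  refine PowerSeries.ext fun n => ?_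
  rw [coeff_mul_derivative_sub_mul, coeff_mk, ← map_ofNat (PowerSeries.C (R := ℝ[X])) 2,
    ← map_ofNat (PowerSeries.C (R := ℝ[X])) 4]
  simp only [add_mul, sub_mul, mul_assoc, map_add, map_sub, PowerSeries.coeff_C_mul,
    PowerSeries.coeff_X_pow, PowerSeries.coeff_mul_C, PowerSeries.coeff_one, coeff_mk]
  match n with
  | 0 | 1 | 2 | 3 =>
    simp [h0, h1, h2, h3] <;> ring
  | n + 4 =>
    have hk := hrec (n + 4) (by omega)
    simp only [map_sub, map_mul, map_natCast, map_ofNat] at hk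
    simp only [Nat.cast_add, Nat.cast_ofNat, one_mul, show 2 ≤ n + 4 by omega, ↓reduceIte,
      Nat.reduceSubDiff, le_add_iff_nonneg_left, zero_le, add_tsub_cancel_right, Nat.reduceEqDiff,
      mul_zero, add_zero, zero_mul, Nat.add_eq_zero_iff, OfNat.ofNat_ne_zero, and_false, sub_self]
    refine mul_left_cancel₀ (two_ne_zero (α := ℝ[X])) ?_
    push_cast at hk ⊢
    linear_combination hk
end

section
/- For every integer n ≥ 2, the polynomial y = P_{-1,2n+1} satisfies the second order differential equation (c⁴ − c²)·y'' + 2c(c² + 1)·y' + (−c²·n(n−1) − 2)·y = 0, as an identity in ℝ[c]. (In the paper's original indexing this polynomial is P_{-1,2n−3}.) -/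
open Polynomial

private lemma stmt3_Rstep (Q : ℕ → Polynomial ℝ) (m : ℕ)
    (hrec : ∀ k : ℕ, 4 ≤ k →
      Polynomial.C (2 * (k : ℝ) - 2) * Q k =
        Polynomial.C (4 * ((k : ℝ) - 4)) * X * Q (k - 2)
          - Polynomial.C (2 * ((k : ℝ) - 7)) * Q (k - 4))
    (hR2 : (X^4 - X^2) * derivative (Q (2*m+5)) + (X - C ((m:ℝ)+1) * X^3) * Q (2*m+5)
            + C (m:ℝ) * X^2 * Q (2*m+3) = 0)
    (hR1 : (X^4 - X^2) * derivative (Q (2*(m+1)+5)) + (X - C (((m+1:ℕ):ℝ)+1) * X^3) * Q (2*(m+1)+5)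
            + C ((m+1:ℕ):ℝ) * X^2 * Q (2*(m+1)+3) = 0) :
    (X^4 - X^2) * derivative (Q (2*(m+2)+5)) + (X - C (((m+2:ℕ):ℝ)+1) * X^3) * Q (2*(m+2)+5)
            + C ((m+2:ℕ):ℝ) * X^2 * Q (2*(m+2)+3) = 0 := by
  rw [show 2*(m+2)+5 = 2*m+9 from by omega, show 2*(m+2)+3 = 2*m+7 from by omega]
  rw [show 2*(m+1)+5 = 2*m+7 from by omega, show 2*(m+1)+3 = 2*m+5 from by omega] at hR1
  have hT := hrec (2*m+9) (by omega)
  have hT1 := hrec (2*m+7) (by omega)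
  rw [show 2*m+9-2 = 2*m+7 from by omega, show 2*m+9-4 = 2*m+5 from by omega] at hT
  rw [show 2*m+7-2 = 2*m+5 from by omega, show 2*m+7-4 = 2*m+3 from by omega] at hT1
  have hTd := congrArg derivative hT
  simp only [derivative_sub, derivative_mul, derivative_C, derivative_X, zero_mul, mul_one,
    zero_add, add_zero, zero_sub, mul_zero] at hTd
  push_cast at hT hT1 hTd hR1 hR2 ⊢
  simp only [map_sub, map_add, map_mul, map_ofNat, map_natCast, map_one] at hT hT1 hTd hR1 hR2 ⊢
  set M : ℝ[X] := ((m : ℕ) : ℝ[X]) with hM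
  have key : (4*M+16) * ((X^4 - X^2) * derivative (Q (2*m+9)) + (X - (M+3) * X^3) * Q (2*m+9)
            + (M+2) * X^2 * Q (2*m+7)) = 0 := by
    linear_combination (X^4 - X^2) * hTd + (X - (M+3)*X^3) * hT + (4*(2*M+5)*X) * hR1
      - (4*M+4) * hR2 + ((M+1)*X^2) * hT1
  rcases mul_eq_zero.mp key with h | h
  · exfalso
    have hne : (4*(m:ℝ)+16) ≠ 0 := by positivity
    have := Polynomial.C_ne_zero.mpr hne
    simp only [map_add, map_mul, map_ofNat, map_natCast] at this
    exact this h
  · linear_combination h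

private lemma stmt3_Lstep (Q : ℕ → Polynomial ℝ) (m : ℕ)
    (hrec : ∀ k : ℕ, 4 ≤ k →
      Polynomial.C (2 * (k : ℝ) - 2) * Q k =
        Polynomial.C (4 * ((k : ℝ) - 4)) * X * Q (k - 2)
          - Polynomial.C (2 * ((k : ℝ) - 7)) * Q (k - 4))
    (hR1 : (X^4 - X^2) * derivative (Q (2*(m+1)+5)) + (X - C (((m+1:ℕ):ℝ)+1) * X^3) * Q (2*(m+1)+5)
            + C ((m+1:ℕ):ℝ) * X^2 * Q (2*(m+1)+3) = 0)
    (hL2 : (X ^ 4 - X ^ 2) * derivative (derivative (Q (2*m+5)))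
        + 2 * X * (X ^ 2 + 1) * derivative (Q (2*m+5))
        + (-(Polynomial.C (((m:ℝ)+2) * ((m:ℝ)+1)) * X ^ 2) - 2) * Q (2*m+5) = 0)
    (hL1 : (X ^ 4 - X ^ 2) * derivative (derivative (Q (2*(m+1)+5)))
        + 2 * X * (X ^ 2 + 1) * derivative (Q (2*(m+1)+5))
        + (-(Polynomial.C ((((m+1:ℕ):ℝ)+2) * (((m+1:ℕ):ℝ)+1)) * X ^ 2) - 2) * Q (2*(m+1)+5) = 0) :
    (X ^ 4 - X ^ 2) * derivative (derivative (Q (2*(m+2)+5)))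
        + 2 * X * (X ^ 2 + 1) * derivative (Q (2*(m+2)+5))
        + (-(Polynomial.C ((((m+2:ℕ):ℝ)+2) * (((m+2:ℕ):ℝ)+1)) * X ^ 2) - 2) * Q (2*(m+2)+5) = 0 := by
  rw [show 2*(m+2)+5 = 2*m+9 from by omega]
  rw [show 2*(m+1)+5 = 2*m+7 from by omega, show 2*(m+1)+3 = 2*m+5 from by omega] at hR1
  rw [show 2*(m+1)+5 = 2*m+7 from by omega] at hL1
  have hT := hrec (2*m+9) (by omega)
  rw [show 2*m+9-2 = 2*m+7 from by omega, show 2*m+9-4 = 2*m+5 from by omega] at hT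
  have hTd := congrArg derivative hT
  simp only [derivative_sub, derivative_mul, derivative_C, derivative_X, zero_mul, mul_one,
    zero_add, add_zero, zero_sub, mul_zero] at hTd
  have hTdd := congrArg derivative hTd
  simp only [derivative_sub, derivative_add, derivative_mul, derivative_C, derivative_X, zero_mul,
    mul_one, zero_add, add_zero, zero_sub, mul_zero] at hTdd
  push_cast at hT hTd hTdd hR1 hL1 hL2 ⊢
  simp only [map_sub, map_add, map_mul, map_ofNat, map_natCast, map_one]
    at hT hTd hTdd hR1 hL1 hL2 ⊢
  set M : ℝ[X] := ((m : ℕ) : ℝ[X]) with hM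
  have key : (4*M+16) * ((X ^ 4 - X ^ 2) * derivative (derivative (Q (2*m+9)))
        + 2 * X * (X ^ 2 + 1) * derivative (Q (2*m+9))
        + (-((M+4) * (M+3) * X ^ 2) - 2) * Q (2*m+9)) = 0 := by
    linear_combination (X^4 - X^2) * hTdd + (2*X*(X^2+1)) * hTd
      + (-((M+4)*(M+3))*X^2 - 2) * hT + (4*(2*M+5)*X) * hL1 + (8*(2*M+5)) * hR1
      - (4*M+4) * hL2
  rcases mul_eq_zero.mp key with h | h
  · exfalso
    have hne : (4*(m:ℝ)+16) ≠ 0 := by positivity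
    have := Polynomial.C_ne_zero.mpr hne
    simp only [map_add, map_mul, map_ofNat, map_natCast] at this
    exact this h
  · linear_combination h

/-- the polynomials `P_{-1,k} = Q_k(0,0,0,1)` (shifted indexing) satisfy, for
`n ≥ 2`, the second order ODE `(c⁴ − c²)y'' + 2c(c²+1)y' + (−c²n(n−1) − 2)y = 0` in `ℝ[c]`,
where `y = P_{-1,2n+1}`. -/
theorem stmt_3 (Q : ℕ → Polynomial ℝ)
    (h0 : Q 0 = 0) (h1 : Q 1 = 0) (h2 : Q 2 = 0) (h3 : Q 3 = 1)
    (hrec : ∀ k : ℕ, 4 ≤ k →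
      Polynomial.C (2 * (k : ℝ) - 2) * Q k =
        Polynomial.C (4 * ((k : ℝ) - 4)) * X * Q (k - 2)
          - Polynomial.C (2 * ((k : ℝ) - 7)) * Q (k - 4)) :
    ∀ n : ℕ, 2 ≤ n →
      (X ^ 4 - X ^ 2) * derivative (derivative (Q (2 * n + 1)))
        + 2 * X * (X ^ 2 + 1) * derivative (Q (2 * n + 1))
        + (-(Polynomial.C ((n : ℝ) * ((n : ℝ) - 1)) * X ^ 2) - 2) * Q (2 * n + 1) = 0 := by
  have h5 := hrec 5 (by norm_num)
  norm_num [h1, h3] at h5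
  have h7 := hrec 7 (by norm_num)
  norm_num [h3] at h7
  have hQ5 : Q 5 = C (2⁻¹ : ℝ) * X := by
    apply mul_left_cancel₀ (show (C (8:ℝ)) ≠ 0 by simp)
    rw [h5, ← mul_assoc, ← C_mul]; norm_num
  have hQ7 : Q 7 = C (2⁻¹ : ℝ) * X ^ 2 := by
    apply mul_left_cancel₀ (show (C (12:ℝ)) ≠ 0 by simp)
    rw [h7, hQ5]; ring
  -- the first order relation, by two-step induction
  have hRpair : ∀ m : ℕ,
      ((X^4 - X^2) * derivative (Q (2*m+5)) + (X - C ((m:ℝ)+1) * X^3) * Q (2*m+5)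
            + C (m:ℝ) * X^2 * Q (2*m+3) = 0) ∧
      ((X^4 - X^2) * derivative (Q (2*(m+1)+5)) + (X - C (((m+1:ℕ):ℝ)+1) * X^3) * Q (2*(m+1)+5)
            + C ((m+1:ℕ):ℝ) * X^2 * Q (2*(m+1)+3) = 0) := by
    intro m
    induction m with
    | zero =>
      constructor
      · norm_num [hQ5, h3, map_ofNat]
        ring
      · norm_num [hQ5, hQ7, map_ofNat]
        ring
    | succ k ih =>
      exact ⟨ih.2, stmt3_Rstep Q k hrec ih.1 ih.2⟩
  have hR : ∀ m : ℕ,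
      (X^4 - X^2) * derivative (Q (2*m+5)) + (X - C ((m:ℝ)+1) * X^3) * Q (2*m+5)
            + C (m:ℝ) * X^2 * Q (2*m+3) = 0 := fun m => (hRpair m).1
  -- the ODE, by two-step induction
  have hLpair : ∀ m : ℕ,
      ((X ^ 4 - X ^ 2) * derivative (derivative (Q (2*m+5)))
        + 2 * X * (X ^ 2 + 1) * derivative (Q (2*m+5))
        + (-(Polynomial.C (((m:ℝ)+2) * ((m:ℝ)+1)) * X ^ 2) - 2) * Q (2*m+5) = 0) ∧
      ((X ^ 4 - X ^ 2) * derivative (derivative (Q (2*(m+1)+5)))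
        + 2 * X * (X ^ 2 + 1) * derivative (Q (2*(m+1)+5))
        + (-(Polynomial.C ((((m+1:ℕ):ℝ)+2) * (((m+1:ℕ):ℝ)+1)) * X ^ 2) - 2) * Q (2*(m+1)+5) = 0) := by
    intro m
    induction m with
    | zero =>
      constructor
      · norm_num [hQ5, map_ofNat]
        ring
      · norm_num [hQ7, map_ofNat]
        ring
    | succ k ih =>
      exact ⟨ih.2, stmt3_Lstep Q k hrec (hRpair k).2 ih.1 ih.2⟩
  intro n hn
  obtain ⟨m, rfl⟩ : ∃ m, n = m + 2 := ⟨n - 2, by omega⟩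
  have h := (hLpair m).1
  rw [show 2*m+5 = 2*(m+2)+1 from by omega] at h
  have hc : (((m+2:ℕ)):ℝ) * (((m+2:ℕ):ℝ) - 1) = ((m:ℝ)+2) * ((m:ℝ)+1) := by
    push_cast; ring
  rw [hc]
  exact h
end

section
/- For every integer n ≥ 2, the polynomial y = P_{-3,2n+1} satisfies the second order differential equation (c² − 1)·y'' + 4c·y' − (n+1)(n−2)·y = 0, as an identity in ℝ[c]. (In the paper's original indexing this polynomial is P_{-3,2n−3}.) -/
open Polynomial

/-- the polynomials `P_{-3,k} = Q_k(0,1,0,0)` (shifted indexing) satisfy, for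
`n ≥ 2`, the second order ODE `(c² − 1)y'' + 4cy' − (n+1)(n−2)y = 0` in `ℝ[c]`,
where `y = P_{-3,2n+1}`. -/
theorem stmt_4 (Q : ℕ → Polynomial ℝ)
    (h0 : Q 0 = 0) (h1 : Q 1 = 1) (h2 : Q 2 = 0) (h3 : Q 3 = 0)
    (hrec : ∀ k : ℕ, 4 ≤ k →
      Polynomial.C (2 * (k : ℝ) - 2) * Q k =
        Polynomial.C (4 * ((k : ℝ) - 4)) * X * Q (k - 2)
          - Polynomial.C (2 * ((k : ℝ) - 7)) * Q (k - 4)) :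
    ∀ n : ℕ, 2 ≤ n →
      (X ^ 2 - 1) * derivative (derivative (Q (2 * n + 1)))
        + 4 * X * derivative (Q (2 * n + 1))
        - Polynomial.C (((n : ℝ) + 1) * ((n : ℝ) - 2)) * Q (2 * n + 1) = 0 := by
  -- base data
  have h5 := hrec 5 (by norm_num)
  rw [show (5:ℕ)-2 = 3 from rfl, show (5:ℕ)-4 = 1 from rfl, h1, h3] at h5
  push_cast at h5
  norm_num [map_neg, map_ofNat] at h5
  -- h5 : 8 * Q 5 = 4
  have h7 := hrec 7 (by norm_num)
  rw [show (7:ℕ)-2 = 5 from rfl, show (7:ℕ)-4 = 3 from rfl, h3] at h7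
  push_cast at h7
  norm_num [map_neg, map_ofNat] at h7
  -- h7 : 12 * Q 7 = 12 * X * Q 5
  have hQ5 : (2 : ℝ[X]) * Q 5 = 1 := by
    refine mul_left_cancel₀ (a := (4 : ℝ[X])) (by norm_num) ?_
    linear_combination h5
  have hQ7 : (2 : ℝ[X]) * Q 7 = X := by
    refine mul_left_cancel₀ (a := (6 : ℝ[X])) (by norm_num) ?_
    linear_combination h7 + 6 * X * hQ5
  have hd5 : derivative (Q 5) = 0 := by
    have h := congrArg derivative hQ5
    simp only [derivative_mul, derivative_ofNat, derivative_one, zero_mul, zero_add] at h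
    exact (mul_eq_zero.mp h).resolve_left (by norm_num)
  have hd7 : (2 : ℝ[X]) * derivative (Q 7) = 1 := by
    have h := congrArg derivative hQ7
    simpa only [derivative_mul, derivative_ofNat, derivative_X, zero_mul, zero_add] using h
  have hdd7 : derivative (derivative (Q 7)) = 0 := by
    have h := congrArg derivative hd7
    simp only [derivative_mul, derivative_ofNat, derivative_one, zero_mul, zero_add] at h
    exact (mul_eq_zero.mp h).resolve_left (by norm_num)
  -- the first-order relation R
  have R : ∀ m : ℕ,
      (X ^ 2 - 1) * derivative (Q (2 * m + 5))
        = Polynomial.C ((m : ℝ)) * (X * Q (2 * m + 5) - Q (2 * m + 3)) := by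
    have key : ∀ m : ℕ,
        ((X ^ 2 - 1) * derivative (Q (2 * m + 5))
          = Polynomial.C ((m : ℝ)) * (X * Q (2 * m + 5) - Q (2 * m + 3))) ∧
        ((X ^ 2 - 1) * derivative (Q (2 * (m+1) + 5))
          = Polynomial.C (((m:ℝ) + 1)) * (X * Q (2 * (m+1) + 5) - Q (2 * (m+1) + 3))) := by
      intro m
      induction m with
      | zero =>
        constructor
        · norm_num [hd5]
        · norm_num
          refine mul_left_cancel₀ (a := (2 : ℝ[X])) (by norm_num) ?_
          linear_combination (X^2-1) * hd7 - X * hQ7 + hQ5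
      | succ k ih =>
        obtain ⟨ihk, ihk1⟩ := ih
        refine ⟨by push_cast; convert ihk1 using 3 <;> omega, ?_⟩
        -- goal at index k+2 : indices 2k+9, 2k+7
        rw [show 2*(k+1+1)+5 = 2*k+9 from by omega, show 2*(k+1+1)+3 = 2*k+7 from by omega]
        rw [show 2*(k+1)+5 = 2*k+7 from by omega, show 2*(k+1)+3 = 2*k+5 from by omega] at ihk1
        have h9 := hrec (2*k+9) (by omega)
        rw [show 2*k+9-2 = 2*k+7 from by omega, show 2*k+9-4 = 2*k+5 from by omega] at h9
        have h9' := congrArg derivative h9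
        simp only [derivative_mul, derivative_sub, derivative_C, derivative_X, zero_mul,
          zero_add, mul_one, add_zero, sub_zero] at h9'
        have h7' := hrec (2*k+7) (by omega)
        rw [show 2*k+7-2 = 2*k+5 from by omega, show 2*k+7-4 = 2*k+3 from by omega] at h7'
        push_cast at h9 h9' h7' ihk ihk1 ⊢
        simp only [map_sub, map_add, map_mul, map_ofNat, map_one] at h9 h9' h7' ihk ihk1 ⊢
        have hq : ((Polynomial.C ((k:ℝ)) * 4 + 16 : ℝ[X])) ≠ 0 := by
          have h2 : ((k:ℝ) * 4 + 16) ≠ 0 := by positivity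
          have h3' : Polynomial.C ((k:ℝ) * 4 + 16) = Polynomial.C ((k:ℝ)) * 4 + 16 := by
            simp only [map_add, map_mul, map_ofNat]
          rw [← h3']
          exact C_ne_zero.mpr h2
        refine mul_left_cancel₀ hq ?_
        linear_combination (-(4*Polynomial.C ((k:ℝ))+4)) * ihk
          + (8*Polynomial.C ((k:ℝ))+20) * X * ihk1
          - (Polynomial.C ((k:ℝ))+2) * X * h9
          + (X^2-1) * h9'
          + (Polynomial.C ((k:ℝ))+1) * h7'
    exact fun m => (key m).1
  -- the second order ODE, shifted form
  have T : ∀ m : ℕ,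
      (X ^ 2 - 1) * derivative (derivative (Q (2 * m + 5)))
        + 4 * X * derivative (Q (2 * m + 5))
        - Polynomial.C (((m : ℝ) + 3) * (m : ℝ)) * Q (2 * m + 5) = 0 := by
    have key : ∀ m : ℕ,
        ((X ^ 2 - 1) * derivative (derivative (Q (2 * m + 5)))
          + 4 * X * derivative (Q (2 * m + 5))
          - Polynomial.C (((m : ℝ) + 3) * (m : ℝ)) * Q (2 * m + 5) = 0) ∧
        ((X ^ 2 - 1) * derivative (derivative (Q (2 * (m+1) + 5)))
          + 4 * X * derivative (Q (2 * (m+1) + 5))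
          - Polynomial.C ((((m:ℝ)+1) + 3) * ((m:ℝ)+1)) * Q (2 * (m+1) + 5) = 0) := by
      intro m
      induction m with
      | zero =>
        constructor
        · norm_num [hd5]
        · norm_num [hdd7, map_ofNat]
          refine mul_left_cancel₀ (a := (2 : ℝ[X])) (by norm_num) ?_
          linear_combination 4 * X * hd7 - 4 * hQ7
      | succ k ih =>
        obtain ⟨ihk, ihk1⟩ := ih
        refine ⟨by push_cast; convert ihk1 using 4 <;> push_cast <;> try ring_nf, ?_⟩
        rw [show 2*(k+1+1)+5 = 2*k+9 from by omega]
        rw [show 2*(k+1)+5 = 2*k+7 from by omega] at ihk1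
        have hRk1 := R (k+1)
        rw [show 2*(k+1)+5 = 2*k+7 from by omega, show 2*(k+1)+3 = 2*k+5 from by omega] at hRk1
        have h9 := hrec (2*k+9) (by omega)
        rw [show 2*k+9-2 = 2*k+7 from by omega, show 2*k+9-4 = 2*k+5 from by omega] at h9
        have h9' := congrArg derivative h9
        simp only [derivative_mul, derivative_sub, derivative_C, derivative_X, zero_mul,
          zero_add, mul_one, add_zero, sub_zero] at h9'
        have h9'' := congrArg derivative h9'
        simp only [derivative_mul, derivative_sub, derivative_add, derivative_C, derivative_X,
          zero_mul, zero_add, mul_one, add_zero, sub_zero] at h9''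
        push_cast at h9 h9' h9'' hRk1 ihk ihk1 ⊢
        simp only [map_sub, map_add, map_mul, map_ofNat, map_one] at h9 h9' h9'' hRk1 ihk ihk1 ⊢
        have hq : ((Polynomial.C ((k:ℝ)) * 4 + 16 : ℝ[X])) ≠ 0 := by
          have hr : ((k:ℝ) * 4 + 16) ≠ 0 := by positivity
          have h3' : Polynomial.C ((k:ℝ) * 4 + 16) = Polynomial.C ((k:ℝ)) * 4 + 16 := by
            simp only [map_add, map_mul, map_ofNat]
          rw [← h3']
          exact C_ne_zero.mpr hr
        refine mul_left_cancel₀ hq ?_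
        linear_combination (8 * Polynomial.C ((k:ℝ)) + 20) * X * ihk1
          - (4 * Polynomial.C ((k:ℝ)) + 4) * ihk
          + (16 * Polynomial.C ((k:ℝ)) + 40) * hRk1
          - (Polynomial.C ((k:ℝ))^2 + 7 * Polynomial.C ((k:ℝ)) + 10) * h9
          + 4 * X * h9'
          + (X^2 - 1) * h9''
    exact fun m => (key m).1
  intro n hn
  obtain ⟨m, rfl⟩ : ∃ m, n = m + 2 := ⟨n - 2, by omega⟩
  have h := T m
  rw [show 2*(m+2)+1 = 2*m+5 from by omega]
  push_cast
  rw [show ((m:ℝ)+2+1)*((m:ℝ)+2-2) = ((m:ℝ)+3)*(m:ℝ) from by ring]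
  exact h
end

section
/- For every integer n ≥ 2, one has the identity of polynomials P_{-1,2n+1} = c·P_{-3,2n+1} in ℝ[c]. (In the paper's original indexing: P_{-1,2n−3} = c·P_{-3,2n−3} for n ≥ 2.) -/
open Polynomial

theorem cancelC (a : ℝ) (p q : Polynomial ℝ) (ha : a ≠ 0)
    (h : Polynomial.C a * p = Polynomial.C a * q) : p = q :=
  mul_left_cancel₀ (Polynomial.C_ne_zero.mpr ha) h

/-- with `P_{-1,k} = Q_k(0,0,0,1)` and `P_{-3,k} = Q_k(0,1,0,0)` (shifted
indexing), one has `P_{-1,2n+1} = c · P_{-3,2n+1}` in `ℝ[c]` for all `n ≥ 2`. -/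
theorem stmt_5 (Q1 Q3 : ℕ → Polynomial ℝ)
    (h10 : Q1 0 = 0) (h11 : Q1 1 = 0) (h12 : Q1 2 = 0) (h13 : Q1 3 = 1)
    (h30 : Q3 0 = 0) (h31 : Q3 1 = 1) (h32 : Q3 2 = 0) (h33 : Q3 3 = 0)
    (hrec1 : ∀ k : ℕ, 4 ≤ k →
      Polynomial.C (2 * (k : ℝ) - 2) * Q1 k =
        Polynomial.C (4 * ((k : ℝ) - 4)) * X * Q1 (k - 2)
          - Polynomial.C (2 * ((k : ℝ) - 7)) * Q1 (k - 4))
    (hrec3 : ∀ k : ℕ, 4 ≤ k →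
      Polynomial.C (2 * (k : ℝ) - 2) * Q3 k =
        Polynomial.C (4 * ((k : ℝ) - 4)) * X * Q3 (k - 2)
          - Polynomial.C (2 * ((k : ℝ) - 7)) * Q3 (k - 4)) :
    ∀ n : ℕ, 2 ≤ n → Q1 (2 * n + 1) = X * Q3 (2 * n + 1) := by
  -- base case k = 5
  have e51 : Q1 5 = Polynomial.C (1/2 : ℝ) * X := by
    have h := hrec1 5 (by norm_num)
    norm_num [h13, h11] at h
    apply cancelC 8 _ _ (by norm_num)
    rw [h, ← mul_assoc, ← Polynomial.C_mul]
    norm_num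
  have e53 : Q3 5 = Polynomial.C (1/2 : ℝ) := by
    have h := hrec3 5 (by norm_num)
    norm_num [h33, h31] at h
    apply cancelC 8 _ _ (by norm_num)
    rw [h, ← Polynomial.C_mul]
    norm_num
  -- base case k = 7
  have e71 : Q1 7 = Polynomial.C (1/2 : ℝ) * X ^ 2 := by
    have h := hrec1 7 (by norm_num)
    norm_num [e51, h13] at h
    apply cancelC 12 _ _ (by norm_num)
    rw [h]
    ring_nf
  have e73 : Q3 7 = Polynomial.C (1/2 : ℝ) * X := by
    have h := hrec3 7 (by norm_num)
    norm_num [e53, h33] at h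
    apply cancelC 12 _ _ (by norm_num)
    rw [h]
    ring_nf
  -- two-step induction
  have key : ∀ n : ℕ, 2 ≤ n →
      Q1 (2 * n + 1) = X * Q3 (2 * n + 1) ∧
      Q1 (2 * (n + 1) + 1) = X * Q3 (2 * (n + 1) + 1) := by
    intro n hn
    induction n, hn using Nat.le_induction with
    | base =>
      constructor
      · show Q1 5 = X * Q3 5
        rw [e51, e53]; ring
      · show Q1 7 = X * Q3 7
        rw [e71, e73]; ring
    | succ n hn ih =>
      refine ⟨ih.2, ?_⟩
      have k4 : 4 ≤ 2 * (n + 2) + 1 := by omega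
      have h1 := hrec1 (2 * (n + 2) + 1) k4
      have h3 := hrec3 (2 * (n + 2) + 1) k4
      have i2 : 2 * (n + 2) + 1 - 2 = 2 * (n + 1) + 1 := by omega
      have i4 : 2 * (n + 2) + 1 - 4 = 2 * n + 1 := by omega
      rw [i2, i4, ih.2, ih.1] at h1
      rw [i2, i4] at h3
      have hc : (2 * ((2 * (n + 2) + 1 : ℕ) : ℝ) - 2) ≠ 0 := by
        push_cast; nlinarith [Nat.cast_nonneg (α := ℝ) n]
      apply cancelC _ _ _ hc
      rw [show 2 * (n + 1 + 1) + 1 = 2 * (n + 2) + 1 from rfl]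
      linear_combination h1 - X * h3
  intro n hn
  exact (key n hn).1
end

section
/- For every natural number n, the polynomial P_n = P_{-2,n} satisfies the fourth order linear differential equation 16(c² − 1)²·P_n'''' + 160c(c² − 1)·P_n''' − 8(c²(n² − 4n − 42) − n² + 4n + 18)·P_n'' − 24c(n² − 4n − 2)·P_n' + (n − 6)(n − 2)²(n + 2)·P_n = 0, as an identity in ℝ[c]. -/
open Polynomial

private lemma stmt7_ladder (Q : ℕ → Polynomial ℝ)
    (h0 : Q 0 = 0) (h1 : Q 1 = 0) (h2 : Q 2 = 1) (h3 : Q 3 = 0)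
    (hrec : ∀ k : ℕ, 4 ≤ k →
      Polynomial.C (2 * (k : ℝ) - 2) * Q k =
        Polynomial.C (4 * ((k : ℝ) - 4)) * X * Q (k - 2)
          - Polynomial.C (2 * ((k : ℝ) - 7)) * Q (k - 4)) :
    ∀ m : ℕ,
      (4 * (X ^ 2 - 1) * derivative (derivative (Q (m + 2)))
        - 4 * (((m : ℕ) : Polynomial ℝ) - 3) * X * derivative (Q (m + 2))
        + (((m : ℕ) : Polynomial ℝ) - 4) * ((m : ℕ) : Polynomial ℝ) * Q (m + 2)
        + 4 * (((m : ℕ) : Polynomial ℝ) - 3) * derivative (Q m) = 0) ∧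
      (4 * (X ^ 2 - 1) * derivative (derivative (Q m))
        + 4 * (((m : ℕ) : Polynomial ℝ) + 1) * X * derivative (Q m)
        + (((m : ℕ) : Polynomial ℝ) + 2) * (((m : ℕ) : Polynomial ℝ) - 2) * Q m
        - 4 * (((m : ℕ) : Polynomial ℝ) + 1) * derivative (Q (m + 2)) = 0) := by
  intro m
  induction m using Nat.strong_induction_on with
  | _ m ih =>
    match m, ih with
    | 0, _ => constructor <;> simp [h0, h2]
    | 1, _ => constructor <;> simp [h1, h3]
    | (m+2), ih =>
      obtain ⟨ih1, ih2⟩ := ih m (by omega)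
      have hq := hrec (m + 2 + 2) (by omega)
      rw [show m + 2 + 2 - 2 = m + 2 from rfl, show m + 2 + 2 - 4 = m from rfl] at hq
      push_cast at hq ih1 ih2 ⊢
      simp only [map_sub, map_add, map_mul, map_ofNat] at hq ⊢
      simp only [Polynomial.C_eq_natCast] at hq ih1 ih2 ⊢
      have hq1 := congrArg derivative hq
      simp [derivative_mul, derivative_sub, derivative_add, derivative_C,
        derivative_X, derivative_ofNat, derivative_one, zero_mul, mul_zero,
        zero_add, add_zero, zero_sub, sub_zero, mul_one, one_mul, neg_zero] at hq1
      have hq2 := congrArg derivative hq1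
      simp [derivative_mul, derivative_sub, derivative_add, derivative_C,
        derivative_X, derivative_ofNat, derivative_one, zero_mul, mul_zero,
        zero_add, add_zero, zero_sub, sub_zero, mul_one, one_mul, neg_zero] at hq2
      have hc : (Polynomial.C (2 * (m : ℝ) + 6) : Polynomial ℝ) ≠ 0 := by
        simp only [ne_eq, Polynomial.C_eq_zero]
        positivity
      have hC : (Polynomial.C (2 * (m : ℝ) + 6) : Polynomial ℝ)
          = 2 * ((m : ℕ) : Polynomial ℝ) + 6 := by
        simp [map_add, map_mul, map_ofNat, Polynomial.C_eq_natCast]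
      constructor
      · apply mul_left_cancel₀ hc
        rw [mul_zero, hC]
        linear_combination (4 * (X ^ 2 - 1)) * hq2
          - 4 * (((m : ℕ) : Polynomial ℝ) - 1) * X * hq1
          + (((m : ℕ) : Polynomial ℝ) - 2) * (((m : ℕ) : Polynomial ℝ) + 2) * hq
          + 4 * ((m : ℕ) : Polynomial ℝ) * X * ih1
          - (2 * ((m : ℕ) : Polynomial ℝ) - 6) * ih2
      · apply mul_left_cancel₀ hc
        rw [mul_zero, hC]
        linear_combination (-4) * (((m : ℕ) : Polynomial ℝ) + 3) * hq1
          + (2 * ((m : ℕ) : Polynomial ℝ) + 6) * ih1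

/-- the polynomials `P_n = P_{-2,n} = Q_n(0,0,1,0)` (shifted indexing) satisfy
`16(c²−1)²P'''' + 160c(c²−1)P''' − 8(c²(n²−4n−42) − n² + 4n + 18)P''
  − 24c(n²−4n−2)P' + (n−6)(n−2)²(n+2)P = 0` in `ℝ[c]`. -/
theorem stmt_7 (Q : ℕ → Polynomial ℝ)
    (h0 : Q 0 = 0) (h1 : Q 1 = 0) (h2 : Q 2 = 1) (h3 : Q 3 = 0)
    (hrec : ∀ k : ℕ, 4 ≤ k →
      Polynomial.C (2 * (k : ℝ) - 2) * Q k =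
        Polynomial.C (4 * ((k : ℝ) - 4)) * X * Q (k - 2)
          - Polynomial.C (2 * ((k : ℝ) - 7)) * Q (k - 4)) :
    ∀ n : ℕ,
      16 * (X ^ 2 - 1) ^ 2 * derivative (derivative (derivative (derivative (Q n))))
        + 160 * X * (X ^ 2 - 1) * derivative (derivative (derivative (Q n)))
        - 8 * (Polynomial.C ((n : ℝ) ^ 2 - 4 * (n : ℝ) - 42) * X ^ 2
            - Polynomial.C ((n : ℝ) ^ 2 - 4 * (n : ℝ) - 18)) * derivative (derivative (Q n))
        - 24 * X * Polynomial.C ((n : ℝ) ^ 2 - 4 * (n : ℝ) - 2) * derivative (Q n)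
        + Polynomial.C (((n : ℝ) - 6) * ((n : ℝ) - 2) ^ 2 * ((n : ℝ) + 2)) * Q n = 0 := by
  intro n
  match n with
  | 0 => simp [h0]
  | 1 => simp [h1]
  | (m+2) =>
    obtain ⟨l1, l2⟩ := stmt7_ladder Q h0 h1 h2 h3 hrec m
    have l1d := congrArg derivative l1
    simp [derivative_mul, derivative_sub, derivative_add, derivative_C,
      derivative_X, derivative_ofNat, derivative_one, derivative_zero,
      derivative_X_pow, Nat.cast_ofNat, map_ofNat, pow_one, zero_mul, mul_zero,
      zero_add, add_zero, zero_sub, sub_zero, mul_one, one_mul, neg_zero] at l1d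
    have l1dd := congrArg derivative l1d
    simp [derivative_mul, derivative_sub, derivative_add, derivative_C,
      derivative_X, derivative_ofNat, derivative_one, derivative_zero,
      derivative_X_pow, Nat.cast_ofNat, map_ofNat, pow_one, zero_mul, mul_zero,
      zero_add, add_zero, zero_sub, sub_zero, mul_one, one_mul, neg_zero] at l1dd
    have l2d := congrArg derivative l2
    simp [derivative_mul, derivative_sub, derivative_add, derivative_C,
      derivative_X, derivative_ofNat, derivative_one, derivative_zero,
      derivative_X_pow, Nat.cast_ofNat, map_ofNat, pow_one, zero_mul, mul_zero,
      zero_add, add_zero, zero_sub, sub_zero, mul_one, one_mul, neg_zero] at l2d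
    push_cast
    simp only [map_sub, map_add, map_mul, map_pow, map_ofNat]
    simp only [Polynomial.C_eq_natCast] at l1 l1d l1dd l2d ⊢
    linear_combination 4 * (X ^ 2 - 1) * l1dd
      + 4 * (((m : ℕ) : Polynomial ℝ) + 3) * X * l1d
      + ((m : ℕ) : Polynomial ℝ) * (((m : ℕ) : Polynomial ℝ) + 4) * l1
      - 4 * (((m : ℕ) : Polynomial ℝ) - 3) * l2d
end

section
/- Let C_n ∈ ℝ[x] (n ≥ −1) be the associated ultraspherical polynomials C_n^{(−1/2)}(x; 3/2), defined by C_{−1} = 0, C_0 = 1 and the recurrence (2n+5)·C_{n+1} = 4(n+1)·x·C_n − (2n−1)·C_{n−1} for n ≥ 0. Then for every natural number n one has P_{-4,2n+4} = C_n; in particular, the even-index polynomials of the family P_{-4} are the associated ultraspherical polynomials with parameters ν = −1/2 and shift 3/2. -/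
open Polynomial

/-- with `P_{-4,k} = Q_k(1,0,0,0)` (shifted indexing) and with
`Ca (n+1) = C_n^{(-1/2)}(x; 3/2)` the associated ultraspherical polynomials (so `Ca 0 = C₋₁ = 0`,
`Ca 1 = C₀ = 1`, and `(2n+5)C_{n+1} = 4(n+1)xC_n − (2n−1)C_{n−1}`), one has
`P_{-4,2n+4} = C_n` for every natural number `n`. -/
theorem stmt_8 (Q : ℕ → Polynomial ℝ)
    (h0 : Q 0 = 1) (h1 : Q 1 = 0) (h2 : Q 2 = 0) (h3 : Q 3 = 0)
    (hrec : ∀ k : ℕ, 4 ≤ k →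
      Polynomial.C (2 * (k : ℝ) - 2) * Q k =
        Polynomial.C (4 * ((k : ℝ) - 4)) * X * Q (k - 2)
          - Polynomial.C (2 * ((k : ℝ) - 7)) * Q (k - 4))
    (Ca : ℕ → Polynomial ℝ)
    (hCm : Ca 0 = 0) (hC0 : Ca 1 = 1)
    (hCrec : ∀ n : ℕ,
      Polynomial.C (2 * (n : ℝ) + 5) * Ca (n + 2) =
        Polynomial.C (4 * ((n : ℝ) + 1)) * X * Ca (n + 1)
          - Polynomial.C (2 * (n : ℝ) - 1) * Ca n) :
    ∀ n : ℕ, Q (2 * n + 4) = Ca (n + 1) := by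
  have key : ∀ n : ℕ, Q (2 * n + 2) = Ca n ∧ Q (2 * n + 4) = Ca (n + 1) := by
    intro n
    induction n with
    | zero =>
      refine ⟨by simpa using h2.trans hCm.symm, ?_⟩
      have h := hrec 4 (by norm_num)
      simp only [show (4:ℕ)-2 = 2 from rfl, show (4:ℕ)-4 = 0 from rfl, h2, h0] at h
      norm_num at h
      rw [hC0]
      exact h
    | succ n ih =>
      obtain ⟨ihA, ihB⟩ := ih
      constructor
      · simpa [show 2*(n+1)+2 = 2*n+4 from by ring] using ihB
      · have h := hrec (2*n+6) (by omega)
        have e2 : 2*n+6-2 = 2*n+4 := by omega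
        have e4 : 2*n+6-4 = 2*n+2 := by omega
        rw [e2, e4, ihA, ihB] at h
        push_cast at h
        have c1 : (2:ℝ) * (2*(n:ℝ)+6) - 2 = 4*(n:ℝ)+10 := by ring
        have c2 : (4:ℝ) * (2*(n:ℝ)+6-4) = 8*(n:ℝ)+8 := by ring
        have c3 : (2:ℝ) * (2*(n:ℝ)+6-7) = 4*(n:ℝ)-2 := by ring
        rw [c1, c2, c3] at h
        have hc := hCrec n
        have hc2 : C (4*(n:ℝ)+10) * Ca (n+2) = C (8*(n:ℝ)+8) * X * Ca (n+1) - C (4*(n:ℝ)-2) * Ca n := by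
          calc C (4*(n:ℝ)+10) * Ca (n+2)
              = C (2:ℝ) * (C (2*(n:ℝ)+5) * Ca (n+2)) := by
                rw [← mul_assoc, ← map_mul, show (2:ℝ)*(2*(n:ℝ)+5) = 4*(n:ℝ)+10 from by ring]
            _ = C 2 * (C (4 * ((n:ℝ) + 1)) * X * Ca (n + 1)) - C 2 * (C (2 * (n:ℝ) - 1) * Ca n) := by
                rw [hc, mul_sub]
            _ = _ := by
                rw [← mul_assoc, ← mul_assoc, ← map_mul,
                  show (2:ℝ)*(4*((n:ℝ)+1)) = 8*(n:ℝ)+8 from by ring,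
                  ← mul_assoc, ← map_mul, show (2:ℝ)*(2*(n:ℝ)-1) = 4*(n:ℝ)-2 from by ring]
        have hne : C ((4:ℝ)*(n:ℝ)+10) ≠ 0 := by
          simp only [ne_eq, Polynomial.C_eq_zero]
          positivity
        have := mul_left_cancel₀ hne (h.trans hc2.symm)
        simpa [show 2*(n+1)+4 = 2*n+6 from by ring] using this
  intro n
  exact (key n).2
end

section
/- Let ν, σ ∈ ℝ be such that for every natural number n the quantities n + σ + 1, n + σ + 2ν, and 2n + 2σ + 2ν − 1 are nonzero. Define the associated ultraspherical polynomials C_n = C_n^{(ν)}(x; σ) ∈ ℝ[x] by C_{−1} = 0, C_0 = 1 and (n + σ + 1)·C_{n+1} = 2x(n + ν + σ)·C_n − (2ν + n + σ − 1)·C_{n−1} for n ≥ 0, and define the associated Jacobi polynomials p_n = P_n^{(ν−1/2, ν−1/2)}(x; σ) ∈ ℝ[x] by p_{−1} = 0, p_0 = 1 and, with γ = 2ν, the recurrence 2(n + σ + 1)(n + σ + γ)(2n + 2σ + γ − 1)·p_{n+1} = (2n + 2σ + γ)(2n + 2σ + γ − 1)(2n + 2σ + γ + 1)·x·p_n − 2(n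 + σ + ν − 1/2)²(2n + 2σ + γ + 1)·p_{n−1} for n ≥ 0. Then for every natural number n one has (2ν + σ)_n · p_n = (ν + σ + 1/2)_n · C_n, where (a)_n = a(a+1)⋯(a+n−1) denotes the ascending Pochhammer symbol. -/
open Polynomial

lemma base_aux (K M K' M' u v : ℝ) (P2 Q2 : ℝ[X]) (hK : K ≠ 0) (hK' : K' ≠ 0)
    (h1 : Polynomial.C K * P2 = Polynomial.C M * X)
    (h2 : Polynomial.C K' * Q2 = Polynomial.C M' * X)
    (s : K' * u * M = K * v * M') :
    Polynomial.C u * P2 = Polynomial.C v * Q2 := by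
  have hKK : (Polynomial.C K * Polynomial.C K' : ℝ[X]) ≠ 0 :=
    mul_ne_zero (by simpa using hK) (by simpa using hK')
  apply mul_left_cancel₀ hKK
  have cs : Polynomial.C K' * Polynomial.C u * Polynomial.C M
      = Polynomial.C K * Polynomial.C v * Polynomial.C M' := by
    simp only [← map_mul]; exact congrArg Polynomial.C s
  linear_combination (Polynomial.C u * Polynomial.C K') * h1
    - (Polynomial.C v * Polynomial.C K) * h2 + X * cs

lemma step_aux (K M N K' M' N' a0 b0 u1 u2 v1 v2 : ℝ) (P1 P2 P3 Q1 Q2 Q3 : ℝ[X])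
    (hK : K ≠ 0) (hK' : K' ≠ 0)
    (h1 : Polynomial.C K * P3 = Polynomial.C M * X * P2 - Polynomial.C N * P1)
    (h2 : Polynomial.C K' * Q3 = Polynomial.C M' * X * Q2 - Polynomial.C N' * Q1)
    (i1 : Polynomial.C a0 * Polynomial.C u1 * P2 = Polynomial.C b0 * Polynomial.C v1 * Q2)
    (i0 : Polynomial.C a0 * P1 = Polynomial.C b0 * Q1)
    (s1 : K' * u2 * M = K * v2 * M')
    (s2 : K' * (u1 * u2) * N = K * (v1 * v2) * N') :
    Polynomial.C a0 * Polynomial.C u1 * Polynomial.C u2 * P3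
      = Polynomial.C b0 * Polynomial.C v1 * Polynomial.C v2 * Q3 := by
  have hKK : (Polynomial.C K * Polynomial.C K' : ℝ[X]) ≠ 0 :=
    mul_ne_zero (by simpa using hK) (by simpa using hK')
  apply mul_left_cancel₀ hKK
  have cs1 : Polynomial.C K' * Polynomial.C u2 * Polynomial.C M
      = Polynomial.C K * Polynomial.C v2 * Polynomial.C M' := by
    simp only [← map_mul]; exact congrArg Polynomial.C s1
  have cs2 : Polynomial.C K' * (Polynomial.C u1 * Polynomial.C u2) * Polynomial.C N
      = Polynomial.C K * (Polynomial.C v1 * Polynomial.C v2) * Polynomial.C N' := by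
    simp only [← map_mul]; exact congrArg Polynomial.C s2
  linear_combination
    (Polynomial.C a0 * Polynomial.C u1 * Polynomial.C u2 * Polynomial.C K') * h1
    - (Polynomial.C b0 * Polynomial.C v1 * Polynomial.C v2 * Polynomial.C K) * h2
    + (Polynomial.C u2 * Polynomial.C K' * Polynomial.C M * X) * i1
    - (Polynomial.C u1 * Polynomial.C u2 * Polynomial.C K' * Polynomial.C N) * i0
    + (Polynomial.C b0 * Polynomial.C v1 * X * Q2) * cs1
    - (Polynomial.C b0 * Q1) * cs2

/-- relation between the associated ultraspherical polynomials
`C_n = C_n^{(ν)}(x; σ)` and the associated Jacobi polynomials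
`p_n = P_n^{(ν−1/2, ν−1/2)}(x; σ)` (with `γ = 2ν`):
`(2ν + σ)ₙ · pₙ = (ν + σ + 1/2)ₙ · Cₙ`, where `(a)ₙ` is the ascending Pochhammer symbol.
Sequences are encoded with an index shift: `Cs (n+1) = C_n`, `Cs 0 = C₋₁ = 0`, and similarly
for `ps`. -/
theorem stmt_9 (ν σ : ℝ)
    (hne : ∀ n : ℕ, ((n : ℝ) + σ + 1) ≠ 0 ∧ ((n : ℝ) + σ + 2 * ν) ≠ 0 ∧
      (2 * (n : ℝ) + 2 * σ + 2 * ν - 1) ≠ 0)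
    (Cs : ℕ → Polynomial ℝ)
    (hCm : Cs 0 = 0) (hC0 : Cs 1 = 1)
    (hCrec : ∀ n : ℕ,
      Polynomial.C ((n : ℝ) + σ + 1) * Cs (n + 2) =
        Polynomial.C (2 * ((n : ℝ) + ν + σ)) * X * Cs (n + 1)
          - Polynomial.C (2 * ν + (n : ℝ) + σ - 1) * Cs n)
    (ps : ℕ → Polynomial ℝ)
    (hpm : ps 0 = 0) (hp0 : ps 1 = 1)
    (hprec : ∀ n : ℕ,
      Polynomial.C (2 * ((n : ℝ) + σ + 1) * ((n : ℝ) + σ + 2 * ν) *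
          (2 * (n : ℝ) + 2 * σ + 2 * ν - 1)) * ps (n + 2) =
        Polynomial.C ((2 * (n : ℝ) + 2 * σ + 2 * ν) * (2 * (n : ℝ) + 2 * σ + 2 * ν - 1) *
            (2 * (n : ℝ) + 2 * σ + 2 * ν + 1)) * X * ps (n + 1)
          - Polynomial.C (2 * ((n : ℝ) + σ + ν - 1 / 2) ^ 2 *
              (2 * (n : ℝ) + 2 * σ + 2 * ν + 1)) * ps n) :
    ∀ n : ℕ,
      Polynomial.C ((ascPochhammer ℝ n).eval (2 * ν + σ)) * ps (n + 1) =
        Polynomial.C ((ascPochhammer ℝ n).eval (ν + σ + 1 / 2)) * Cs (n + 1) := by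
  have main : ∀ n : ℕ,
      (Polynomial.C ((ascPochhammer ℝ n).eval (2 * ν + σ)) * ps (n + 1) =
        Polynomial.C ((ascPochhammer ℝ n).eval (ν + σ + 1 / 2)) * Cs (n + 1)) ∧
      (Polynomial.C ((ascPochhammer ℝ (n + 1)).eval (2 * ν + σ)) * ps (n + 2) =
        Polynomial.C ((ascPochhammer ℝ (n + 1)).eval (ν + σ + 1 / 2)) * Cs (n + 2)) := by
    intro n
    induction n with
    | zero =>
      constructor
      · simp [hp0, hC0]
      · have h1 := hprec 0
        have h2 := hCrec 0
        obtain ⟨e1, e2, e3⟩ := hne 0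
        simp only [Nat.cast_zero, zero_add, mul_zero, hp0, hpm, hC0, hCm, mul_one,
          sub_zero] at h1 h2
        simp only [Nat.cast_zero, zero_add, mul_zero] at e1 e2 e3
        simp only [zero_add, ascPochhammer_one, eval_X]
        exact base_aux _ _ _ _ _ _ _ _
          (mul_ne_zero (mul_ne_zero (mul_ne_zero two_ne_zero e1) e2) e3) e1
          h1 h2 (by ring)
    | succ k ih =>
      refine ⟨ih.2, ?_⟩
      have h1 := hprec (k + 1)
      have h2 := hCrec (k + 1)
      obtain ⟨e1, e2, e3⟩ := hne (k + 1)
      have i1 := ih.2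
      have i0 := ih.1
      simp only [ascPochhammer_succ_eval, map_mul] at i1 ⊢
      exact step_aux _ _ _ _ _ _ _ _ _ _ _ _ _ _ _ _ _ _
        (mul_ne_zero (mul_ne_zero (mul_ne_zero two_ne_zero e1) e2) e3) e1
        h1 h2 i1 i0 (by push_cast; ring) (by push_cast; ring)
  exact fun n => (main n).1
end

section
/- The family (P_{-2,2n+6})_{n ≥ 0} is not classical: if a, b, c₀, e, f ∈ ℂ are such that for every natural number n there exists λ_n ∈ ℂ with (a·x² + b·x + c₀)·(P_{-2,2n+6})'' + (e·x + f)·(P_{-2,2n+6})' = λ_n·P_{-2,2n+6} as an identity in ℂ[x], then a = b = c₀ = e = f = 0. In other words, no nonzero differential operator of order at most two with polynomial coefficients of degree at most the order and without constant term has all the polynomials P_{-2,2n+6} as eigenfunctions. -/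
open Polynomial

/-- the family `P_{-2,2n+6}` (with `P_{-2,k} = Q_k(0,0,1,0)` in shifted indexing,
over `ℂ`) is not classical: if a second order operator
`(ax² + bx + c₀)(d/dx)² + (ex + f)(d/dx)` has every `P_{-2,2n+6}` as an eigenfunction, then
`a = b = c₀ = e = f = 0`. -/
theorem stmt_13 (Q : ℕ → Polynomial ℂ)
    (h0 : Q 0 = 0) (h1 : Q 1 = 0) (h2 : Q 2 = 1) (h3 : Q 3 = 0)
    (hrec : ∀ k : ℕ, 4 ≤ k →
      Polynomial.C (2 * (k : ℂ) - 2) * Q k =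
        Polynomial.C (4 * ((k : ℂ) - 4)) * X * Q (k - 2)
          - Polynomial.C (2 * ((k : ℂ) - 7)) * Q (k - 4))
    (a b c₀ e f : ℂ)
    (heig : ∀ n : ℕ, ∃ lam : ℂ,
      (Polynomial.C a * X ^ 2 + Polynomial.C b * X + Polynomial.C c₀) *
          derivative (derivative (Q (2 * n + 6)))
        + (Polynomial.C e * X + Polynomial.C f) * derivative (Q (2 * n + 6))
      = Polynomial.C lam * Q (2 * n + 6)) :
    a = 0 ∧ b = 0 ∧ c₀ = 0 ∧ e = 0 ∧ f = 0 := by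
  have h4 : Q 4 = 0 := by
    have hk := hrec 4 (by norm_num)
    norm_num [h0, h2] at hk
    apply Polynomial.funext; intro r
    have := congrArg (eval r) hk
    simp at this ⊢
    tauto
  have h6 : Q 6 = C (1/5 : ℂ) := by
    have hk := hrec 6 (by norm_num)
    norm_num [h4, h2] at hk
    apply Polynomial.funext; intro r
    have h := congrArg (eval r) hk
    simp at h ⊢
    linear_combination (1/10 : ℂ) * h
  have h8 : Q 8 = C (8/35 : ℂ) * X := by
    have hk := hrec 8 (by norm_num)
    norm_num [h6, h4] at hk
    apply Polynomial.funext; intro r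
    have h := congrArg (eval r) hk
    simp at h ⊢
    linear_combination (1/14 : ℂ) * h
  have h10 : Q 10 = C (32/105 : ℂ) * X ^ 2 - C (7/105 : ℂ) := by
    have hk := hrec 10 (by norm_num)
    norm_num [h8, h6] at hk
    apply Polynomial.funext; intro r
    have h := congrArg (eval r) hk
    simp at h ⊢
    linear_combination (1/18 : ℂ) * h
  have h12 : Q 12 = C (512/1155 : ℂ) * X ^ 3 - C (232/1155 : ℂ) * X := by
    have hk := hrec 12 (by norm_num)
    norm_num [h10, h8] at hk
    apply Polynomial.funext; intro r
    have h := congrArg (eval r) hk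
    simp at h ⊢
    linear_combination (1/22 : ℂ) * h
  have h14 : Q 14 = C (2048/3003 : ℂ) * X ^ 4 - C (2368/5005 : ℂ) * X ^ 2 + C (7/195 : ℂ) := by
    have hk := hrec 14 (by norm_num)
    norm_num [h12, h10] at hk
    apply Polynomial.funext; intro r
    have h := congrArg (eval r) hk
    simp at h ⊢
    linear_combination (1/26 : ℂ) * h
  obtain ⟨l1, E1⟩ := heig 1
  obtain ⟨l2, E2⟩ := heig 2
  obtain ⟨l3, E3⟩ := heig 3
  obtain ⟨l4, E4⟩ := heig 4
  norm_num [h8] at E1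
  norm_num [h10] at E2
  norm_num [h12] at E3
  norm_num [h14] at E4
  -- scalar equations via evaluation
  have e10 := congrArg (eval (0:ℂ)) E1
  have e11 := congrArg (eval (1:ℂ)) E1
  have e20 := congrArg (eval (0:ℂ)) E2
  have e21 := congrArg (eval (1:ℂ)) E2
  have e2m := congrArg (eval (-1:ℂ)) E2
  have e31 := congrArg (eval (1:ℂ)) E3
  have e32 := congrArg (eval (2:ℂ)) E3
  have e40 := congrArg (eval (0:ℂ)) E4
  have e41 := congrArg (eval (1:ℂ)) E4
  simp at e10 e11 e20 e21 e2m e31 e32 e40 e41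
  refine ⟨?_, ?_, ?_, ?_, ?_⟩
  · linear_combination (-1723187/23040 : ℂ) * e10 + (7749/64 : ℂ) * e20 + (244643/1600 : ℂ) * e21 + (-119/1 : ℂ) * e2m + (-5470927/30720 : ℂ) * e31 + (168707/12288 : ℂ) * e32 + (-39039/256 : ℂ) * e40 + (143143/6400 : ℂ) * e41
  · linear_combination (-1/1 : ℂ) * e10 + (105/128 : ℂ) * e21 + (-105/128 : ℂ) * e2m
  · linear_combination (429583/5760 : ℂ) * e10 + (-247863/2048 : ℂ) * e20 + (-7771841/51200 : ℂ) * e21 + (3773/32 : ℂ) * e2m + (1345883/7680 : ℂ) * e31 + (-41503/3072 : ℂ) * e32 + (609609/4096 : ℂ) * e40 + (-2235233/102400 : ℂ) * e41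
  · linear_combination (-408803/1536 : ℂ) * e10 + (28035/64 : ℂ) * e20 + (346773/640 : ℂ) * e21 + (-53655/128 : ℂ) * e2m + (-1275967/2048 : ℂ) * e31 + (196735/4096 : ℂ) * e32 + (-135135/256 : ℂ) * e40 + (99099/1280 : ℂ) * e41
  · linear_combination e10
end

section
/- The family (P_{-4,2n+4})_{n ≥ 0} is not classical: if a, b, c₀, e, f ∈ ℂ are such that for every natural number n there exists λ_n ∈ ℂ with (a·x² + b·x + c₀)·(P_{-4,2n+4})'' + (e·x + f)·(P_{-4,2n+4})' = λ_n·P_{-4,2n+4} as an identity in ℂ[x], then a = b = c₀ = e = f = 0. In other words, no nonzero differential operator of order at most two with polynomial coefficients of degree at most the order and without constant term has all the polynomials P_{-4,2n+4} as eigenfunctions. -/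
/-!
The recurrence gives `P_{-4,8}`, `P_{-4,10}`, `P_{-4,12}` as nonzero multiples of `32x² - 5`,
`8x³ - 3x` and `2048x⁴ - 1248x² + 75`. Comparing both sides of the eigen-equation for each of them
(by evaluating at a few points) yields linear conditions on the operator: the cubic forces
`b = f = 0`, and the three polynomials give three independent linear equations in `a, c₀, e`.
-/

open Polynomial

section CommRing

variable {R : Type*} [CommRing R] {a b c e f : R}

noncomputable def secondOrderOp (a b c e f : R) (p : R[X]) : R[X] :=
  (C a * X ^ 2 + C b * X + C c) * derivative (derivative p) + (C e * X + C f) * derivative p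

def IsEigenpoly (a b c e f : R) (p : R[X]) : Prop :=
  ∃ lam : R, secondOrderOp a b c e f p = C lam * p

def QRecurrence (Q : ℕ → R[X]) : Prop :=
  ∀ k : ℕ, 4 ≤ k →
    C (2 * (k : R) - 2) * Q k =
      C (4 * ((k : R) - 4)) * X * Q (k - 2) - C (2 * ((k : R) - 7)) * Q (k - 4)

theorem secondOrderOp_C_mul (s : R) (p : R[X]) :
    secondOrderOp a b c e f (C s * p) = C s * secondOrderOp a b c e f p := by
  simp only [secondOrderOp, derivative_C_mul]
  ring

theorem IsEigenpoly.of_C_mul [IsDomain R] {s : R} (hs : s ≠ 0) {p : R[X]}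
    (h : IsEigenpoly a b c e f (C s * p)) : IsEigenpoly a b c e f p := by
  obtain ⟨lam, hlam⟩ := h
  refine ⟨lam, mul_left_cancel₀ (C_ne_zero.mpr hs) ?_⟩
  rw [← secondOrderOp_C_mul, hlam]
  ring

theorem IsEigenpoly.eval_eq {p : R[X]} (h : IsEigenpoly a b c e f p) :
    ∃ lam : R, ∀ x : R,
      (a * x ^ 2 + b * x + c) * (derivative (derivative p)).eval x
        + (e * x + f) * (derivative p).eval x = lam * p.eval x := by
  obtain ⟨lam, hlam⟩ := h
  exact ⟨lam, fun x => by simpa [secondOrderOp] using congrArg (eval x) hlam⟩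

theorem QRecurrence.eval_eq {Q : ℕ → R[X]} (hQ : QRecurrence Q) {k : ℕ} (hk : 4 ≤ k) (x : R) :
    (2 * k - 2) * (Q k).eval x =
      4 * (k - 4) * x * (Q (k - 2)).eval x - 2 * (k - 7) * (Q (k - 4)).eval x := by
  simpa [mul_assoc] using congrArg (eval x) (hQ k hk)

end CommRing

section CharZero

variable {K : Type*} [Field K] [CharZero K]

namespace IsEigenpoly

variable {a b c e f : K}

theorem quadratic (h : IsEigenpoly a b c e f (32 * X ^ 2 - 5)) :
    5 * a + 32 * c + 5 * e = 0 := by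
  obtain ⟨lam, hlam⟩ := h.eval_eq
  have h0 := hlam 0
  have h1 := hlam 1
  have h2 := hlam (-1)
  simp at h0 h1 h2
  linear_combination (27 / 64 : K) * h0 + (5 / 128 : K) * (h1 + h2)

theorem cubic (h : IsEigenpoly a b c e f (8 * X ^ 3 - 3 * X)) :
    b = 0 ∧ f = 0 ∧ 3 * a + 8 * c + e = 0 := by
  obtain ⟨lam, hlam⟩ := h.eval_eq
  have hf := hlam 0
  have h1 := hlam 1
  have h2 := hlam (-1)
  have h3 := hlam 2
  simp at hf h1 h2 h3
  have hb : b = 0 := by linear_combination (h1 + h2) / 96 - (42 / 96 : K) * hf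
  subst hf hb
  exact ⟨rfl, rfl, by linear_combination (58 * (h1 - h2) - 10 * h3) / 576⟩

theorem quartic (h : IsEigenpoly a b c e f (2048 * X ^ 4 - 1248 * X ^ 2 + 75)) :
    345 * a + 800 * c + 89 * e = 0 := by
  obtain ⟨lam, hlam⟩ := h.eval_eq
  have h0 := hlam 0
  have h1 := hlam 1
  have h2 := hlam (-1)
  simp at h0 h1 h2
  linear_combination (75 * (h1 + h2) - 1750 * h0) / 9600

end IsEigenpoly

namespace QRecurrence

variable {Q : ℕ → K[X]}

theorem four (hQ : QRecurrence Q) (h0 : Q 0 = 1) (h2 : Q 2 = 0) : Q 4 = 1 :=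
  funext fun x => by
    have h := hQ.eval_eq le_rfl x
    simp [h0, h2] at h ⊢
    linear_combination h / 6

theorem six (hQ : QRecurrence Q) (h2 : Q 2 = 0) (h4 : Q 4 = 1) : Q 6 = C (4 / 5) * X :=
  funext fun x => by
    have h := hQ.eval_eq (k := 6) (by norm_num) x
    simp [h2, h4] at h ⊢
    linear_combination h / 10

theorem eight (hQ : QRecurrence Q) (h4 : Q 4 = 1) (h6 : Q 6 = C (4 / 5) * X) :
    Q 8 = C (1 / 35) * (32 * X ^ 2 - 5) :=
  funext fun x => by
    have h := hQ.eval_eq (k := 8) (by norm_num) x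
    simp [h4, h6] at h ⊢
    linear_combination h / 14

theorem ten (hQ : QRecurrence Q) (h6 : Q 6 = C (4 / 5) * X)
    (h8 : Q 8 = C (1 / 35) * (32 * X ^ 2 - 5)) :
    Q 10 = C (16 / 105) * (8 * X ^ 3 - 3 * X) :=
  funext fun x => by
    have h := hQ.eval_eq (k := 10) (by norm_num) x
    simp [h6, h8] at h ⊢
    linear_combination h / 18

theorem twelve (hQ : QRecurrence Q) (h8 : Q 8 = C (1 / 35) * (32 * X ^ 2 - 5))
    (h10 : Q 10 = C (16 / 105) * (8 * X ^ 3 - 3 * X)) :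
    Q 12 = C (1 / 1155) * (2048 * X ^ 4 - 1248 * X ^ 2 + 75) :=
  funext fun x => by
    have h := hQ.eval_eq (k := 12) (by norm_num) x
    simp [h8, h10] at h ⊢
    linear_combination h / 22

end QRecurrence

end CharZero

theorem stmt_14_general (Q : ℕ → Polynomial ℂ)
    (h0 : Q 0 = 1) (h2 : Q 2 = 0)
    (hrec : ∀ k : ℕ, 4 ≤ k →
      Polynomial.C (2 * (k : ℂ) - 2) * Q k =
        Polynomial.C (4 * ((k : ℂ) - 4)) * X * Q (k - 2)
          - Polynomial.C (2 * ((k : ℂ) - 7)) * Q (k - 4))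
    (a b c₀ e f : ℂ)
    (heig : ∀ n : ℕ, ∃ lam : ℂ,
      (Polynomial.C a * X ^ 2 + Polynomial.C b * X + Polynomial.C c₀) *
          derivative (derivative (Q (2 * n + 4)))
        + (Polynomial.C e * X + Polynomial.C f) * derivative (Q (2 * n + 4))
      = Polynomial.C lam * Q (2 * n + 4)) :
    a = 0 ∧ b = 0 ∧ c₀ = 0 ∧ e = 0 ∧ f = 0 := by
  have hQ : QRecurrence Q := hrec
  have hQ4 := hQ.four h0 h2
  have hQ6 := hQ.six h2 hQ4
  have hQ8 := hQ.eight hQ4 hQ6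
  have hQ10 := hQ.ten hQ6 hQ8
  have hQ12 := hQ.twelve hQ8 hQ10
  have eig8 : IsEigenpoly a b c₀ e f (Q 8) := heig 2
  have eig10 : IsEigenpoly a b c₀ e f (Q 10) := heig 3
  have eig12 : IsEigenpoly a b c₀ e f (Q 12) := heig 4
  rw [hQ8] at eig8
  rw [hQ10] at eig10
  rw [hQ12] at eig12
  have hA := (eig8.of_C_mul (by norm_num)).quadratic
  obtain ⟨rfl, rfl, hB⟩ := (eig10.of_C_mul (by norm_num)).cubic
  have hC := (eig12.of_C_mul (by norm_num)).quartic
  have ha : a = 0 := by linear_combination (-11 / 32 : ℂ) * hA + (9 / 2 : ℂ) * hB - hC / 32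
  have hc : c₀ = 0 := by linear_combination (39 / 128 : ℂ) * hA - 5 * hB + (5 / 128 : ℂ) * hC
  exact ⟨ha, rfl, hc, by linear_combination hB - 3 * ha - 8 * hc, rfl⟩

/-- the family `P_{-4,2n+4}` (with `P_{-4,k} = Q_k(1,0,0,0)` in shifted indexing,
over `ℂ`) is not classical: if a second order operator
`(ax² + bx + c₀)(d/dx)² + (ex + f)(d/dx)` has every `P_{-4,2n+4}` as an eigenfunction, then
`a = b = c₀ = e = f = 0`. -/
theorem stmt_14 (Q : ℕ → Polynomial ℂ)
    (h0 : Q 0 = 1) (h1 : Q 1 = 0) (h2 : Q 2 = 0) (h3 : Q 3 = 0)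
    (hrec : ∀ k : ℕ, 4 ≤ k →
      Polynomial.C (2 * (k : ℂ) - 2) * Q k =
        Polynomial.C (4 * ((k : ℂ) - 4)) * X * Q (k - 2)
          - Polynomial.C (2 * ((k : ℂ) - 7)) * Q (k - 4))
    (a b c₀ e f : ℂ)
    (heig : ∀ n : ℕ, ∃ lam : ℂ,
      (Polynomial.C a * X ^ 2 + Polynomial.C b * X + Polynomial.C c₀) *
          derivative (derivative (Q (2 * n + 4)))
        + (Polynomial.C e * X + Polynomial.C f) * derivative (Q (2 * n + 4))
      = Polynomial.C lam * Q (2 * n + 4)) :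
    a = 0 ∧ b = 0 ∧ c₀ = 0 ∧ e = 0 ∧ f = 0 :=
  stmt_14_general Q h0 h2 hrec a b c₀ e f heig
end

section
/- Write P_k = P_{-4,k}. For every integer n ≥ 8 one has, as an identity in ℝ[c], 0 = −9P_n + 20cP_{n−2} − (16c² + 6)P_{n−4} + 20cP_{n−6} − 9P_{n−8} − 16cP_n' + 8(1 + 7c²)P_{n−2}' − 48c(1 + c²)P_{n−4}' + 8(1 + 7c²)P_{n−6}' − 16cP_{n−8}' + 4(1 − c²)(P_n'' − 4cP_{n−2}'' + 2(1 + 2c²)P_{n−4}'' − 4cP_{n−6}'' + P_{n−8}''). -/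
open Polynomial

/-- with `P_k = P_{-4,k} = Q_k(1,0,0,0)` (shifted indexing), for `n ≥ 8` one has
`0 = −9Pₙ + 20cPₙ₋₂ − (16c²+6)Pₙ₋₄ + 20cPₙ₋₆ − 9Pₙ₋₈ − 16cPₙ' + 8(1+7c²)Pₙ₋₂'
  − 48c(1+c²)Pₙ₋₄' + 8(1+7c²)Pₙ₋₆' − 16cPₙ₋₈'
  + 4(1−c²)(Pₙ'' − 4cPₙ₋₂'' + 2(1+2c²)Pₙ₋₄'' − 4cPₙ₋₆'' + Pₙ₋₈'')` in `ℝ[c]`. -/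
theorem stmt_15 (P : ℕ → Polynomial ℝ)
    (h0 : P 0 = 1) (h1 : P 1 = 0) (h2 : P 2 = 0) (h3 : P 3 = 0)
    (hrec : ∀ k : ℕ, 4 ≤ k →
      Polynomial.C (2 * (k : ℝ) - 2) * P k =
        Polynomial.C (4 * ((k : ℝ) - 4)) * X * P (k - 2)
          - Polynomial.C (2 * ((k : ℝ) - 7)) * P (k - 4)) :
    ∀ n : ℕ, 8 ≤ n →
      (0 : Polynomial ℝ) =
        -9 * P n + 20 * X * P (n - 2) - (16 * X ^ 2 + 6) * P (n - 4)
          + 20 * X * P (n - 6) - 9 * P (n - 8)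
          - 16 * X * derivative (P n) + 8 * (1 + 7 * X ^ 2) * derivative (P (n - 2))
          - 48 * X * (1 + X ^ 2) * derivative (P (n - 4))
          + 8 * (1 + 7 * X ^ 2) * derivative (P (n - 6)) - 16 * X * derivative (P (n - 8))
          + 4 * (1 - X ^ 2) *
            (derivative (derivative (P n)) - 4 * X * derivative (derivative (P (n - 2)))
              + 2 * (1 + 2 * X ^ 2) * derivative (derivative (P (n - 4)))
              - 4 * X * derivative (derivative (P (n - 6)))
              + derivative (derivative (P (n - 8)))) := by
  -- All odd-index polynomials vanish.
  have hodd : ∀ m, Odd m → P m = 0 := by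
    intro m
    induction m using Nat.strong_induction_on with
    | _ m ih =>
      intro hm
      rcases Nat.lt_or_ge m 5 with h5 | h5
      · interval_cases m
        · exact absurd hm (by decide)
        · exact h1
        · exact absurd hm (by decide)
        · exact h3
        · exact absurd hm (by decide)
      · have hA := hrec m (by omega)
        have e2 : P (m - 2) = 0 := ih _ (by omega) (by
          obtain ⟨t, rfl⟩ := hm; exact ⟨t - 1, by omega⟩)
        have e4 : P (m - 4) = 0 := ih _ (by omega) (by
          obtain ⟨t, rfl⟩ := hm; exact ⟨t - 2, by omega⟩)
        rw [e2, e4] at hA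
        simp only [mul_zero, sub_zero, zero_sub, neg_zero] at hA
        rcases mul_eq_zero.mp hA with hc | hp
        · exfalso
          rw [Polynomial.C_eq_zero] at hc
          have : (5:ℝ) ≤ (m:ℝ) := by exact_mod_cast h5
          linarith
        · exact hp
  intro n
  induction n using Nat.strong_induction_on with
  | _ n ih =>
    intro hn
    rcases Nat.even_or_odd n with he | ho
    · -- even case
      have hmod : n % 2 = 0 := Nat.even_iff.mp he
      rcases (show n = 8 ∨ n = 10 ∨ 12 ≤ n by omega) with rfl | rfl | h12
      · -- base case n = 8
        have A8 := hrec 8 (by norm_num)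
        have A6 := hrec 6 (by norm_num)
        have A4 := hrec 4 (by norm_num)
        simp only [show (8:ℕ)-2=6 from rfl, show (8:ℕ)-4=4 from rfl, show (8:ℕ)-6=2 from rfl,
          show (8:ℕ)-8=0 from rfl, show (6:ℕ)-2=4 from rfl, show (6:ℕ)-4=2 from rfl,
          show (4:ℕ)-2=2 from rfl, show (4:ℕ)-4=0 from rfl] at A8 A6 A4 ⊢
        have B8 := congrArg derivative A8
        have B6 := congrArg derivative A6
        have B4 := congrArg derivative A4
        simp only [derivative_mul, derivative_sub, derivative_C, derivative_X, zero_mul, zero_add,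
          one_mul, mul_one] at B8 B6 B4
        have C8 := congrArg derivative B8
        have C6 := congrArg derivative B6
        have C4 := congrArg derivative B4
        simp only [derivative_mul, derivative_sub, derivative_add, derivative_C, derivative_X,
          zero_mul, zero_add, one_mul, mul_one] at C8 C6 C4
        have hd0 : derivative (P 0) = 0 := by rw [h0]; simp
        have hdd0 : derivative (derivative (P 0)) = 0 := by rw [hd0]; simp
        have hd2 : derivative (P 2) = 0 := by rw [h2]; simp
        have hdd2 : derivative (derivative (P 2)) = 0 := by rw [hd2]; simp
        push_cast at A8 A6 A4 B8 B6 B4 C8 C6 C4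
        simp only [map_sub, map_add, map_mul, map_ofNat, Polynomial.C_1, Polynomial.C_0]
          at A8 A6 A4 B8 B6 B4 C8 C6 C4
        refine (mul_left_cancel₀ (show (42:Polynomial ℝ) ≠ 0 by norm_num) ?_).symm
        rw [mul_zero]
        linear_combination (norm := ring1)
          (-27 : Polynomial ℝ) * A8 + (-48*X) * B8 + (12 - 12*X^2) * C8
          + (-36*X) * A6 + (72 + 120*X^2) * B6 + (-48*X + 48*X^3) * C6
          + (63 : Polynomial ℝ) * A4 + (-352*X - 48*X^3) * B4 + (52 - 4*X^2 - 48*X^4) * C4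
          + (-2784*X - 288*X^3) * hd0 + (480 - 192*X^2 - 288*X^4) * hdd0
          + (768*X) * h2 + (480 + 2592*X^2) * hd2 + (-768*X + 768*X^3) * hdd2
      · -- base case n = 10
        have A10 := hrec 10 (by norm_num)
        have A8 := hrec 8 (by norm_num)
        have A6 := hrec 6 (by norm_num)
        have A4 := hrec 4 (by norm_num)
        simp only [show (10:ℕ)-2=8 from rfl, show (10:ℕ)-4=6 from rfl, show (10:ℕ)-6=4 from rfl,
          show (10:ℕ)-8=2 from rfl,
          show (8:ℕ)-2=6 from rfl, show (8:ℕ)-4=4 from rfl,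
          show (6:ℕ)-2=4 from rfl, show (6:ℕ)-4=2 from rfl,
          show (4:ℕ)-2=2 from rfl, show (4:ℕ)-4=0 from rfl] at A10 A8 A6 A4 ⊢
        have B10 := congrArg derivative A10
        have B8 := congrArg derivative A8
        have B6 := congrArg derivative A6
        have B4 := congrArg derivative A4
        simp only [derivative_mul, derivative_sub, derivative_C, derivative_X, zero_mul, zero_add,
          one_mul, mul_one] at B10 B8 B6 B4
        have C10 := congrArg derivative B10
        have C8 := congrArg derivative B8
        have C6 := congrArg derivative B6
        have C4 := congrArg derivative B4
        simp only [derivative_mul, derivative_sub, derivative_add, derivative_C, derivative_X,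
          zero_mul, zero_add, one_mul, mul_one] at C10 C8 C6 C4
        have hd0 : derivative (P 0) = 0 := by rw [h0]; simp
        have hdd0 : derivative (derivative (P 0)) = 0 := by rw [hd0]; simp
        have hd2 : derivative (P 2) = 0 := by rw [h2]; simp
        have hdd2 : derivative (derivative (P 2)) = 0 := by rw [hd2]; simp
        push_cast at A10 A8 A6 A4 B10 B8 B6 B4 C10 C8 C6 C4
        simp only [map_sub, map_add, map_mul, map_ofNat, Polynomial.C_1, Polynomial.C_0]
          at A10 A8 A6 A4 B10 B8 B6 B4 C10 C8 C6 C4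
        refine (mul_left_cancel₀ (show (126:Polynomial ℝ) ≠ 0 by norm_num) ?_).symm
        rw [mul_zero]
        linear_combination (norm := ring1)
          (-63 : Polynomial ℝ) * A10 + (-112*X) * B10 + (28 - 28*X^2) * C10
          + (-120*X) * A8 + (168 + 216*X^2) * B8 + (-96*X + 96*X^3) * C8
          + (231 - 48*X^2) * A6 + (-576*X + 48*X^3) * B6 + (84 - 36*X^2 - 48*X^4) * C6
          + (336 + 240*X^2 - 64*X^4) * B4 + (-192*X + 256*X^3 - 64*X^5) * C4
          + (2016 + 1440*X^2 - 384*X^4) * hd0 + (-1152*X + 1536*X^3 - 384*X^5) * hdd0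
          + (-672 - 96*X^2) * h2 + (-3168*X + 96*X^3) * hd2 + (672 - 576*X^2 - 96*X^4) * hdd2
      · -- inductive step: n = 2j + 12
        obtain ⟨j, rfl⟩ : ∃ j, n = 2*j+12 := ⟨(n-12)/2, by omega⟩
        have IH1 := ih (2*j+10) (by omega) (by omega)
        have IH2 := ih (2*j+8) (by omega) (by omega)
        simp only [show 2*j+10-2=2*j+8 by omega, show 2*j+10-4=2*j+6 by omega,
          show 2*j+10-6=2*j+4 by omega, show 2*j+10-8=2*j+2 by omega,
          show 2*j+8-2=2*j+6 by omega, show 2*j+8-4=2*j+4 by omega,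
          show 2*j+8-6=2*j+2 by omega, show 2*j+8-8=2*j from by omega] at IH1 IH2
        have A0 := hrec (2*j+12) (by omega)
        have A2 := hrec (2*j+10) (by omega)
        have A4 := hrec (2*j+8) (by omega)
        have A6 := hrec (2*j+6) (by omega)
        have A8 := hrec (2*j+4) (by omega)
        simp only [show 2*j+12-2=2*j+10 by omega, show 2*j+12-4=2*j+8 by omega,
          show 2*j+12-6=2*j+6 by omega, show 2*j+12-8=2*j+4 by omega,
          show 2*j+10-2=2*j+8 by omega, show 2*j+10-4=2*j+6 by omega,
          show 2*j+8-2=2*j+6 by omega, show 2*j+8-4=2*j+4 by omega,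
          show 2*j+6-2=2*j+4 by omega, show 2*j+6-4=2*j+2 by omega,
          show 2*j+4-2=2*j+2 by omega, show 2*j+4-4=2*j from by omega] at A0 A2 A4 A6 A8 ⊢
        have B0 := congrArg derivative A0
        have B2 := congrArg derivative A2
        have B4 := congrArg derivative A4
        have B6 := congrArg derivative A6
        have B8 := congrArg derivative A8
        simp only [derivative_mul, derivative_sub, derivative_C, derivative_X, zero_mul, zero_add,
          one_mul, mul_one] at B0 B2 B4 B6 B8
        have C0 := congrArg derivative B0
        have C2 := congrArg derivative B2
        have C4 := congrArg derivative B4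
        have C6 := congrArg derivative B6
        have C8 := congrArg derivative B8
        simp only [derivative_mul, derivative_sub, derivative_add, derivative_C, derivative_X,
          zero_mul, zero_add, one_mul, mul_one] at C0 C2 C4 C6 C8
        push_cast at A0 A2 A4 A6 A8 B0 B2 B4 B6 B8 C0 C2 C4 C6 C8
        simp only [map_sub, map_add, map_mul, map_ofNat, Polynomial.C_1, Polynomial.C_0]
          at A0 A2 A4 A6 A8 B0 B2 B4 B6 B8 C0 C2 C4 C6 C8
        have hne : (4 * Polynomial.C (j:ℝ) + 22 : Polynomial ℝ) ≠ 0 := by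
          have h : (4 * Polynomial.C (j:ℝ) + 22 : Polynomial ℝ) = Polynomial.C (4*(j:ℝ)+22) := by
            simp [map_add, map_mul, map_ofNat]
          rw [h, Ne, Polynomial.C_eq_zero]
          positivity
        refine (mul_left_cancel₀ hne ?_).symm
        rw [mul_zero]
        linear_combination (norm := ring1)
          (-(8*Polynomial.C (j:ℝ)+16)*X) * IH1 + (4*Polynomial.C (j:ℝ)-6) * IH2
          + (-9 : Polynomial ℝ) * A0 + (-16*X) * B0 + (4 - 4*X^2) * C0
          + (-12*X) * A2 + (24 + 40*X^2) * B2 + (16*X^3 - 16*X) * C2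
          + (42 : Polynomial ℝ) * A4 + (-80*X - 16*X^3) * B4 + (8 + 8*X^2 - 16*X^4) * C4
          + (-12*X) * A6 + (24 + 40*X^2) * B6 + (16*X^3 - 16*X) * C6
          + (-9 : Polynomial ℝ) * A8 + (-16*X) * B8 + (4 - 4*X^2) * C8
    · -- odd case: everything vanishes
      rw [hodd n ho, hodd (n-2) (Nat.Odd.sub_even (by omega) ho (by decide)),
        hodd (n-4) (Nat.Odd.sub_even (by omega) ho (by decide)),
        hodd (n-6) (Nat.Odd.sub_even (by omega) ho (by decide)),
        hodd (n-8) (Nat.Odd.sub_even (by omega) ho (by decide))]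
      simp
end

section
/- Write P_k = P_{-4,k}. For every integer n ≥ 8 one has, as an identity in ℝ[c], 0 = (n−4)²(c²(n−1) − n + 9)·P_n + 4c(c²(n² − 4n + 3) − n² + 4n + 29)·P_n' + 4(c² − 1)(c²(n−1) − n + 9)·P_n'' − 2c(n−2)²(c²(n−4) − n + 8)·P_{n−2} − 4(2c⁴(n² − 5n + 4) − 3c²(n² − 8n + 7) + n² − 14n + 45)·P_{n−2}' − 8c(c² − 1)(c²(n−4) − n + 8)·P_{n−2}''. -/
open Polynomial

private lemma dstep {a b d : ℝ} {p q r : Polynomial ℝ}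
    (h : C a * p = C b * X * q - C d * r) :
    C a * derivative p = C b * (q + X * derivative q) - C d * derivative r := by
  have h' := congrArg derivative h
  simp only [derivative_mul, derivative_sub, derivative_C, derivative_X, zero_mul, one_mul,
    zero_add, mul_one] at h'
  linear_combination h'

private lemma dstep2 {a b d : ℝ} {p q r : Polynomial ℝ}
    (h : C a * p = C b * (q + X * derivative q) - C d * r) :
    C a * derivative p
      = C b * (2 * derivative q + X * derivative (derivative q)) - C d * derivative r := by
  have h' := congrArg derivative h
  simp only [derivative_mul, derivative_add, derivative_sub, derivative_C, derivative_X,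
    zero_mul, one_mul, zero_add, mul_one] at h'
  linear_combination h'

private lemma aux_T (P : ℕ → Polynomial ℝ)
    (h0 : P 0 = 1) (h1 : P 1 = 0) (h2 : P 2 = 0) (h3 : P 3 = 0)
    (hrec : ∀ k : ℕ, 4 ≤ k →
      Polynomial.C (2 * (k : ℝ) - 2) * P k =
        Polynomial.C (4 * ((k : ℝ) - 4)) * X * P (k - 2)
          - Polynomial.C (2 * ((k : ℝ) - 7)) * P (k - 4)) :
    ∀ m : ℕ, 2 ≤ m →
      Polynomial.C (((m : ℝ) - 2) ^ 2) * P (m + 2)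
        - Polynomial.C (4 * ((m : ℝ) - 3)) * X * derivative (P (m + 2))
        + 4 * (X ^ 2 - 1) * derivative (derivative (P (m + 2)))
        + Polynomial.C (4 * ((m : ℝ) - 3)) * derivative (P m) = 0 := by
  -- base computations
  have hP4 : P 4 = 1 := by
    have r4 := hrec 4 (by norm_num)
    rw [show (4 : ℕ) - 2 = 2 by norm_num, show (4 : ℕ) - 4 = 0 by norm_num, h2, h0] at r4
    have h6 : (Polynomial.C (6 : ℝ)) ≠ 0 := Polynomial.C_ne_zero.mpr (by norm_num)
    refine mul_left_cancel₀ h6 ?_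
    rw [mul_one]
    linear_combination (norm := (push_cast; simp only [map_ofNat, map_add, map_sub, map_mul,
      map_pow, map_one, map_zero, map_neg]; ring1)) r4
  have hP5 : P 5 = 0 := by
    have r5 := hrec 5 (by norm_num)
    rw [show (5 : ℕ) - 2 = 3 by norm_num, show (5 : ℕ) - 4 = 1 by norm_num, h3, h1] at r5
    have h8 : (Polynomial.C (8 : ℝ)) ≠ 0 := Polynomial.C_ne_zero.mpr (by norm_num)
    refine mul_left_cancel₀ h8 ?_
    rw [mul_zero]
    linear_combination (norm := (push_cast; simp only [map_ofNat, map_add, map_sub, map_mul,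
      map_pow, map_one, map_zero, map_neg]; ring1)) r5
  have hP7 : P 7 = 0 := by
    have r7 := hrec 7 (by norm_num)
    rw [show (7 : ℕ) - 2 = 5 by norm_num, show (7 : ℕ) - 4 = 3 by norm_num, hP5, h3] at r7
    have h12 : (Polynomial.C (12 : ℝ)) ≠ 0 := Polynomial.C_ne_zero.mpr (by norm_num)
    refine mul_left_cancel₀ h12 ?_
    rw [mul_zero]
    linear_combination (norm := (push_cast; simp only [map_ofNat, map_add, map_sub, map_mul,
      map_pow, map_one, map_zero, map_neg]; ring1)) r7
  have r6 : Polynomial.C (10 : ℝ) * P 6 = Polynomial.C 8 * X := by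
    have r6' := hrec 6 (by norm_num)
    rw [show (6 : ℕ) - 2 = 4 by norm_num, show (6 : ℕ) - 4 = 2 by norm_num, hP4, h2] at r6'
    linear_combination (norm := (push_cast; simp only [map_ofNat, map_add, map_sub, map_mul,
      map_pow, map_one, map_zero, map_neg]; ring1)) r6'
  have r6d : Polynomial.C (10 : ℝ) * derivative (P 6) = Polynomial.C 8 := by
    have h' := congrArg derivative r6
    simp only [derivative_mul, derivative_C, derivative_X, zero_mul, one_mul, zero_add,
      mul_one] at h'
    linear_combination h'
  have r6dd : Polynomial.C (10 : ℝ) * derivative (derivative (P 6)) = 0 := by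
    have h' := congrArg derivative r6d
    simp only [derivative_mul, derivative_C, zero_mul, zero_add] at h'
    linear_combination h'
  intro m
  induction m using Nat.strong_induction_on with
  | _ m ih =>
    intro hm
    by_cases hm6 : m < 6
    · interval_cases m
      · -- m = 2
        rw [show (2 : ℕ) + 2 = 4 by norm_num, hP4, h2]
        norm_num
      · -- m = 3
        rw [show (3 : ℕ) + 2 = 5 by norm_num, hP5, h3]
        norm_num
      · -- m = 4
        rw [show (4 : ℕ) + 2 = 6 by norm_num, hP4]
        have h10 : (Polynomial.C (10 : ℝ)) ≠ 0 := Polynomial.C_ne_zero.mpr (by norm_num)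
        refine mul_left_cancel₀ h10 ?_
        rw [mul_zero]
        linear_combination (norm := (push_cast; simp only [map_ofNat, map_add, map_sub, map_mul,
          map_pow, map_one, map_zero, map_neg, Polynomial.derivative_one]; ring1))
          Polynomial.C ((4 : ℝ)) * r6 - Polynomial.C (4 : ℝ) * X * r6d
            + (4 * (X ^ 2 - 1)) * r6dd
      · -- m = 5
        rw [show (5 : ℕ) + 2 = 7 by norm_num, hP7, hP5]
        norm_num
    · obtain ⟨j, rfl⟩ : ∃ j, m = j + 6 := ⟨m - 6, by omega⟩
      have t2 := ih (j + 4) (by omega) (by omega)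
      have t4 := ih (j + 2) (by omega) (by omega)
      rw [show j + 4 + 2 = j + 6 by omega] at t2
      rw [show j + 2 + 2 = j + 4 by omega] at t4
      have e0 := hrec (j + 8) (by omega)
      rw [show j + 8 - 2 = j + 6 by omega, show j + 8 - 4 = j + 4 by omega] at e0
      have e1 := dstep e0
      have e2 := dstep2 e1
      have f0 := hrec (j + 6) (by omega)
      rw [show j + 6 - 2 = j + 4 by omega, show j + 6 - 4 = j + 2 by omega] at f0
      have f1 := dstep f0
      rw [show j + 6 + 2 = j + 8 by omega]
      have hC : (Polynomial.C (2 * (j : ℝ) + 14)) ≠ 0 :=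
        Polynomial.C_ne_zero.mpr (by positivity)
      refine mul_left_cancel₀ hC ?_
      rw [mul_zero]
      linear_combination (norm := (push_cast; simp only [map_ofNat, map_add, map_sub, map_mul,
        map_pow, map_one, map_zero, map_neg]; ring1))
        Polynomial.C (((j : ℝ) + 4) ^ 2) * e0
          - Polynomial.C (4 * ((j : ℝ) + 3)) * X * e1
          + (4 * (X ^ 2 - 1)) * e2
          + Polynomial.C (4 * ((j : ℝ) + 4)) * X * t2
          - Polynomial.C (2 * ((j : ℝ) + 1)) * t4
          + Polynomial.C (4 * ((j : ℝ) + 1)) * f1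

/-- with `P_k = P_{-4,k} = Q_k(1,0,0,0)` (shifted indexing), for `n ≥ 8` one has
`0 = (n−4)²(c²(n−1) − n + 9)Pₙ + 4c(c²(n²−4n+3) − n² + 4n + 29)Pₙ'
  + 4(c²−1)(c²(n−1) − n + 9)Pₙ'' − 2c(n−2)²(c²(n−4) − n + 8)Pₙ₋₂
  − 4(2c⁴(n²−5n+4) − 3c²(n²−8n+7) + n² − 14n + 45)Pₙ₋₂'
  − 8c(c²−1)(c²(n−4) − n + 8)Pₙ₋₂''` in `ℝ[c]`. -/
theorem stmt_16 (P : ℕ → Polynomial ℝ)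
    (h0 : P 0 = 1) (h1 : P 1 = 0) (h2 : P 2 = 0) (h3 : P 3 = 0)
    (hrec : ∀ k : ℕ, 4 ≤ k →
      Polynomial.C (2 * (k : ℝ) - 2) * P k =
        Polynomial.C (4 * ((k : ℝ) - 4)) * X * P (k - 2)
          - Polynomial.C (2 * ((k : ℝ) - 7)) * P (k - 4)) :
    ∀ n : ℕ, 8 ≤ n →
      (0 : Polynomial ℝ) =
        Polynomial.C (((n : ℝ) - 4) ^ 2) *
            (Polynomial.C ((n : ℝ) - 1) * X ^ 2 - Polynomial.C ((n : ℝ) - 9)) * P n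
          + 4 * X * (Polynomial.C ((n : ℝ) ^ 2 - 4 * (n : ℝ) + 3) * X ^ 2
              - Polynomial.C ((n : ℝ) ^ 2 - 4 * (n : ℝ) - 29)) * derivative (P n)
          + 4 * (X ^ 2 - 1) *
              (Polynomial.C ((n : ℝ) - 1) * X ^ 2 - Polynomial.C ((n : ℝ) - 9)) *
              derivative (derivative (P n))
          - 2 * X * Polynomial.C (((n : ℝ) - 2) ^ 2) *
              (Polynomial.C ((n : ℝ) - 4) * X ^ 2 - Polynomial.C ((n : ℝ) - 8)) * P (n - 2)
          - 4 * (Polynomial.C (2 * ((n : ℝ) ^ 2 - 5 * (n : ℝ) + 4)) * X ^ 4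
              - Polynomial.C (3 * ((n : ℝ) ^ 2 - 8 * (n : ℝ) + 7)) * X ^ 2
              + Polynomial.C ((n : ℝ) ^ 2 - 14 * (n : ℝ) + 45)) * derivative (P (n - 2))
          - 8 * X * (X ^ 2 - 1) *
              (Polynomial.C ((n : ℝ) - 4) * X ^ 2 - Polynomial.C ((n : ℝ) - 8)) *
              derivative (derivative (P (n - 2))) := by
  intro n hn
  obtain ⟨j, rfl⟩ : ∃ j, n = j + 8 := ⟨n - 8, by omega⟩
  have t2 := aux_T P h0 h1 h2 h3 hrec (j + 6) (by omega)
  have t4 := aux_T P h0 h1 h2 h3 hrec (j + 4) (by omega)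
  rw [show j + 6 + 2 = j + 8 by omega] at t2
  rw [show j + 4 + 2 = j + 6 by omega] at t4
  have e0 := hrec (j + 8) (by omega)
  rw [show j + 8 - 2 = j + 6 by omega, show j + 8 - 4 = j + 4 by omega] at e0
  have e1 := dstep e0
  rw [show j + 8 - 2 = j + 6 by omega]
  linear_combination (norm := (push_cast; simp only [map_ofNat, map_add, map_sub, map_mul,
    map_pow, map_one, map_zero, map_neg]; ring1))
    (- (Polynomial.C ((j : ℝ) + 7) * X ^ 2 - Polynomial.C ((j : ℝ) - 1))) * t2
      - (Polynomial.C (2 * (j : ℝ)) * X - Polynomial.C (2 * ((j : ℝ) + 4)) * X ^ 3) * t4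
      - (Polynomial.C (4 * ((j : ℝ) + 4)) * X ^ 3 - Polynomial.C (4 * (j : ℝ)) * X) * e1
end

section
/- Write P_k = P_{-4,k}. For every integer n ≥ 8 with n ≠ 11 one has, as an identity in ℝ[c], 0 = (n−2)²(c²(n+1) − n + 7)·P_{n−2} + 4c(c²(n² − 1) − n² + 33)·P_{n−2}' + 4(c² − 1)(c²(n+1) − n + 7)·P_{n−2}'' − 8c(n−4)²·P_n − 4(c²(n² − 8n + 39) − n² + 8n − 7)·P_n' − 32c(c² − 1)·P_n''. -/
open Polynomial

/-- with `P_k = P_{-4,k} = Q_k(1,0,0,0)` (shifted indexing), for `n ≥ 8`, `n ≠ 11`: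
`0 = (n−2)²(c²(n+1) − n + 7)Pₙ₋₂ + 4c(c²(n²−1) − n² + 33)Pₙ₋₂'
  + 4(c²−1)(c²(n+1) − n + 7)Pₙ₋₂'' − 8c(n−4)²Pₙ − 4(c²(n²−8n+39) − n² + 8n − 7)Pₙ'
  − 32c(c²−1)Pₙ''` in `ℝ[c]`. -/
theorem stmt_17 (P : ℕ → Polynomial ℝ)
    (h0 : P 0 = 1) (h1 : P 1 = 0) (h2 : P 2 = 0) (h3 : P 3 = 0)
    (hrec : ∀ k : ℕ, 4 ≤ k →
      Polynomial.C (2 * (k : ℝ) - 2) * P k =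
        Polynomial.C (4 * ((k : ℝ) - 4)) * X * P (k - 2)
          - Polynomial.C (2 * ((k : ℝ) - 7)) * P (k - 4)) :
    ∀ n : ℕ, 8 ≤ n → n ≠ 11 →
      (0 : Polynomial ℝ) =
        Polynomial.C (((n : ℝ) - 2) ^ 2) *
            (Polynomial.C ((n : ℝ) + 1) * X ^ 2 - Polynomial.C ((n : ℝ) - 7)) * P (n - 2)
          + 4 * X * (Polynomial.C ((n : ℝ) ^ 2 - 1) * X ^ 2
              - Polynomial.C ((n : ℝ) ^ 2 - 33)) * derivative (P (n - 2))
          + 4 * (X ^ 2 - 1) *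
              (Polynomial.C ((n : ℝ) + 1) * X ^ 2 - Polynomial.C ((n : ℝ) - 7)) *
              derivative (derivative (P (n - 2)))
          - 8 * X * Polynomial.C (((n : ℝ) - 4) ^ 2) * P n
          - 4 * (Polynomial.C ((n : ℝ) ^ 2 - 8 * (n : ℝ) + 39) * X ^ 2
              - Polynomial.C ((n : ℝ) ^ 2 - 8 * (n : ℝ) + 7)) * derivative (P n)
          - 32 * X * (X ^ 2 - 1) * derivative (derivative (P n)) := by
  have key4 : ∀ k : ℕ, 4 ≤ k → P (k - 2) = 0 → P (k - 4) = 0 → P k = 0 := by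
    intro k hk ha hb
    have h := hrec k hk
    rw [ha, hb] at h
    simp only [mul_zero, sub_zero] at h
    have hne : (2 * (k : ℝ) - 2) ≠ 0 := by
      have : (4 : ℝ) ≤ (k : ℝ) := by exact_mod_cast hk
      linarith
    rcases mul_eq_zero.mp h with h' | h'
    · exact absurd h' (Polynomial.C_ne_zero.mpr hne)
    · exact h'
  have h5 : P 5 = 0 := key4 5 (by norm_num) (by norm_num [h3]) (by norm_num [h1])
  have h7 : P 7 = 0 := key4 7 (by norm_num) (by norm_num [h5]) (by norm_num [h3])
  have h9 : P 9 = 0 := key4 9 (by norm_num) (by norm_num [h7]) (by norm_num [h5])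
  have h11 : P 11 = 0 := key4 11 (by norm_num) (by norm_num [h9]) (by norm_num [h7])
  have h13 : P 13 = 0 := key4 13 (by norm_num) (by norm_num [h11]) (by norm_num [h9])
  have h15 : P 15 = 0 := key4 15 (by norm_num) (by norm_num [h13]) (by norm_num [h11])
  -- explicit even data
  have hr4 := hrec 4 (by norm_num)
  rw [show (4:ℕ)-2 = 2 from rfl, show (4:ℕ)-4 = 0 from rfl, h0, h2] at hr4
  push_cast at hr4; norm_num at hr4
  have hr6 := hrec 6 (by norm_num)
  rw [show (6:ℕ)-2 = 4 from rfl, show (6:ℕ)-4 = 2 from rfl, h2, hr4] at hr6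
  push_cast at hr6; norm_num [map_ofNat] at hr6
  have hr8 := hrec 8 (by norm_num)
  rw [show (8:ℕ)-2 = 6 from rfl, show (8:ℕ)-4 = 4 from rfl, hr4] at hr8
  push_cast at hr8; norm_num [map_ofNat] at hr8
  have hr10 := hrec 10 (by norm_num)
  rw [show (10:ℕ)-2 = 8 from rfl, show (10:ℕ)-4 = 6 from rfl] at hr10
  push_cast at hr10; norm_num [map_ofNat] at hr10
  have dhr6 := congrArg derivative hr6
  have ddhr6 := congrArg derivative dhr6
  have dhr8 := congrArg derivative hr8
  have ddhr8 := congrArg derivative dhr8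
  have dhr10 := congrArg derivative hr10
  have ddhr10 := congrArg derivative dhr10
  simp only [derivative_mul, derivative_sub, derivative_add, derivative_C, derivative_X,
    derivative_one, derivative_zero, derivative_ofNat, zero_mul, mul_zero, zero_add, add_zero,
    mul_one, one_mul] at dhr6 ddhr6 dhr8 ddhr8 dhr10 ddhr10
  intro n
  induction n using Nat.strong_induction_on with
  | _ n ih =>
    intro hn hne
    rcases (show n = 8 ∨ n = 9 ∨ n = 10 ∨ n = 13 ∨ n = 15 ∨
        (12 ≤ n ∧ n ≠ 13 ∧ n ≠ 15) by omega) with h | h | h | h | h | ⟨ha, hb, hc⟩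
    · -- n = 8
      subst h
      rw [show (8:ℕ)-2 = 6 from rfl]
      have key : Polynomial.C (35:ℝ) * (Polynomial.C (((((8:ℕ)) : ℝ) - 2) ^ 2) *
            (Polynomial.C ((((8:ℕ)) : ℝ) + 1) * X ^ 2 - Polynomial.C ((((8:ℕ)) : ℝ) - 7)) * P 6
          + 4 * X * (Polynomial.C ((((8:ℕ)) : ℝ) ^ 2 - 1) * X ^ 2
              - Polynomial.C ((((8:ℕ)) : ℝ) ^ 2 - 33)) * derivative (P 6)
          + 4 * (X ^ 2 - 1) *
              (Polynomial.C ((((8:ℕ)) : ℝ) + 1) * X ^ 2 - Polynomial.C ((((8:ℕ)) : ℝ) - 7)) *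
              derivative (derivative (P 6))
          - 8 * X * Polynomial.C (((((8:ℕ)) : ℝ) - 4) ^ 2) * P 8
          - 4 * (Polynomial.C ((((8:ℕ)) : ℝ) ^ 2 - 8 * (((8:ℕ)) : ℝ) + 39) * X ^ 2
              - Polynomial.C ((((8:ℕ)) : ℝ) ^ 2 - 8 * (((8:ℕ)) : ℝ) + 7)) * derivative (P 8)
          - 32 * X * (X ^ 2 - 1) * derivative (derivative (P 8))) = 0 := by
        push_cast
        norm_num [map_ofNat, -mul_eq_zero]
        linear_combination (norm := ring1)
          (-14 - 2*X^2) * hr6 + (-66*X + 2*X^3) * dhr6 + (14 - 12*X^2 - 2*X^4) * ddhr6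
          + (-320*X) * hr8 + (70 - 390*X^2) * dhr8 + (80*X - 80*X^3) * ddhr8
      have h35 : Polynomial.C (35:ℝ) ≠ 0 := Polynomial.C_ne_zero.mpr (by norm_num)
      · -- note: key has exactly the goal's RHS shape up to the C (↑8) casts
        exact ((mul_eq_zero.mp key).resolve_left h35).symm
    · -- n = 9
      subst h
      rw [show (9:ℕ)-2 = 7 from rfl, h7, h9]
      simp
    · -- n = 10
      subst h
      rw [show (10:ℕ)-2 = 8 from rfl]
      have key : Polynomial.C (315:ℝ) * (Polynomial.C (((((10:ℕ)) : ℝ) - 2) ^ 2) *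
            (Polynomial.C ((((10:ℕ)) : ℝ) + 1) * X ^ 2 - Polynomial.C ((((10:ℕ)) : ℝ) - 7)) * P 8
          + 4 * X * (Polynomial.C ((((10:ℕ)) : ℝ) ^ 2 - 1) * X ^ 2
              - Polynomial.C ((((10:ℕ)) : ℝ) ^ 2 - 33)) * derivative (P 8)
          + 4 * (X ^ 2 - 1) *
              (Polynomial.C ((((10:ℕ)) : ℝ) + 1) * X ^ 2 - Polynomial.C ((((10:ℕ)) : ℝ) - 7)) *
              derivative (derivative (P 8))
          - 8 * X * Polynomial.C (((((10:ℕ)) : ℝ) - 4) ^ 2) * P 10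
          - 4 * (Polynomial.C ((((10:ℕ)) : ℝ) ^ 2 - 8 * (((10:ℕ)) : ℝ) + 39) * X ^ 2
              - Polynomial.C ((((10:ℕ)) : ℝ) ^ 2 - 8 * (((10:ℕ)) : ℝ) + 7)) * derivative (P 10)
          - 32 * X * (X ^ 2 - 1) * derivative (derivative (P 10))) = 0 := by
        push_cast
        norm_num [map_ofNat, -mul_eq_zero]
        linear_combination (norm := ring1)
          (-96*X + 48*X^3) * hr6 + (-270 + 126*X^2 - 48*X^4) * dhr6
          + (96*X - 144*X^3 + 48*X^5) * ddhr6
          + (-1080 + 120*X^2) * hr8 + (-870*X - 90*X^3) * dhr8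
          + (270 - 300*X^2 + 30*X^4) * ddhr8
          + (-5040*X) * hr10 + (1890 - 4130*X^2) * dhr10 + (560*X - 560*X^3) * ddhr10
      have h315 : Polynomial.C (315:ℝ) ≠ 0 := Polynomial.C_ne_zero.mpr (by norm_num)
      exact ((mul_eq_zero.mp key).resolve_left h315).symm
    · -- n = 13
      subst h
      rw [show (13:ℕ)-2 = 11 from rfl, h11, h13]
      simp
    · -- n = 15
      subst h
      rw [show (15:ℕ)-2 = 13 from rfl, h13, h15]
      simp
    · -- inductive step, 12 ≤ n, n ≠ 13, n ≠ 15
      have c2 : ((n - 2 : ℕ) : ℝ) = (n : ℝ) - 2 := by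
        rw [Nat.cast_sub (by omega)]; norm_num
      have c4 : ((n - 4 : ℕ) : ℝ) = (n : ℝ) - 4 := by
        rw [Nat.cast_sub (by omega)]; norm_num
      have hA := hrec n (by omega)
      have hB := hrec (n - 2) (by omega)
      rw [c2, show n - 2 - 2 = n - 4 by omega, show n - 2 - 4 = n - 6 by omega] at hB
      have IH1 := ih (n - 2) (by omega) (by omega) (by omega)
      rw [c2, show n - 2 - 2 = n - 4 by omega] at IH1
      have IH2 := ih (n - 4) (by omega) (by omega) (by omega)
      rw [c4, show n - 4 - 2 = n - 6 by omega] at IH2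
      have dhA := congrArg derivative hA
      have ddhA := congrArg derivative dhA
      have dhB := congrArg derivative hB
      have ddhB := congrArg derivative dhB
      simp only [derivative_mul, derivative_sub, derivative_add, derivative_C, derivative_X,
        zero_mul, mul_zero, zero_add, add_zero, mul_one, one_mul] at dhA ddhA dhB ddhB
      have hKne : ((n : ℝ) - 3) * ((n : ℝ) - 11) * (2 * (n : ℝ) - 2) ≠ 0 := by
        have h12 : (12 : ℝ) ≤ (n : ℝ) := by exact_mod_cast ha
        have : (0:ℝ) < (n:ℝ) - 3 := by linarith
        have : (0:ℝ) < (n:ℝ) - 11 := by linarith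
        have : (0:ℝ) < 2*(n:ℝ) - 2 := by linarith
        positivity
      have key : Polynomial.C (((n : ℝ) - 3) * ((n : ℝ) - 11) * (2 * (n : ℝ) - 2)) *
          (Polynomial.C (((n : ℝ) - 2) ^ 2) *
                (Polynomial.C ((n : ℝ) + 1) * X ^ 2 - Polynomial.C ((n : ℝ) - 7)) * P (n - 2)
              + 4 * X * (Polynomial.C ((n : ℝ) ^ 2 - 1) * X ^ 2
                  - Polynomial.C ((n : ℝ) ^ 2 - 33)) * derivative (P (n - 2))
              + 4 * (X ^ 2 - 1) *
                  (Polynomial.C ((n : ℝ) + 1) * X ^ 2 - Polynomial.C ((n : ℝ) - 7)) *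
                  derivative (derivative (P (n - 2)))
              - 8 * X * Polynomial.C (((n : ℝ) - 4) ^ 2) * P n
              - 4 * (Polynomial.C ((n : ℝ) ^ 2 - 8 * (n : ℝ) + 39) * X ^ 2
                  - Polynomial.C ((n : ℝ) ^ 2 - 8 * (n : ℝ) + 7)) * derivative (P n)
              - 32 * X * (X ^ 2 - 1) * derivative (derivative (P n))) = 0 := by
        simp only [map_sub, map_add, map_mul, map_pow, map_one, map_ofNat] at *
        set N := Polynomial.C ((n : ℝ)) with hN
        linear_combination (norm := ring1)
          (-8*(N-3)*(N-11)*(N-4)^2*X) * hA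
          + (-4*(N-3)*(N-11)*(((N-4)^2+23)*X^2 - (N-1)*(N-7))) * dhA
          + (-32*(N-3)*(N-11)*X*(X^2-1)) * ddhA
          + ((N-1)*(N-7)*(N-6)^2*((N-3)*X^2-(N-11))) * hB
          + (4*(N-1)*(N-7)*X*(((N-4)^2-1)*X^2-((N-4)^2-33))) * dhB
          + (4*(N-1)*(N-7)*(X^2-1)*((N-3)*X^2-(N-11))) * ddhB
          + (-4*(N-6)*(N-7)*(N-3)*X) * IH1
          + (2*(N-1)*(N-7)*(N-9)) * IH2
      exact ((mul_eq_zero.mp key).resolve_left (Polynomial.C_ne_zero.mpr hKne)).symm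
end

section
/- Write P_k = P_{-4,k}. For every integer n ≥ 8 with n ≠ 9 and n ≠ 11 one has, as an identity in ℝ[c], 0 = 4(n−5)·P_{n−2}' + (n−4)²·P_n − 4c(n−5)·P_n' + 4(c² − 1)·P_n''. -/
open Polynomial

/-- with `P_k = P_{-4,k} = Q_k(1,0,0,0)` (shifted indexing), for `n ≥ 8`,
`n ≠ 9`, `n ≠ 11`: `0 = 4(n−5)Pₙ₋₂' + (n−4)²Pₙ − 4c(n−5)Pₙ' + 4(c²−1)Pₙ''` in `ℝ[c]`. -/
theorem stmt_18 (P : ℕ → Polynomial ℝ)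
    (h0 : P 0 = 1) (h1 : P 1 = 0) (h2 : P 2 = 0) (h3 : P 3 = 0)
    (hrec : ∀ k : ℕ, 4 ≤ k →
      Polynomial.C (2 * (k : ℝ) - 2) * P k =
        Polynomial.C (4 * ((k : ℝ) - 4)) * X * P (k - 2)
          - Polynomial.C (2 * ((k : ℝ) - 7)) * P (k - 4)) :
    ∀ n : ℕ, 8 ≤ n → n ≠ 9 → n ≠ 11 →
      (0 : Polynomial ℝ) =
        Polynomial.C (4 * ((n : ℝ) - 5)) * derivative (P (n - 2))
          + Polynomial.C (((n : ℝ) - 4) ^ 2) * P n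
          - Polynomial.C (4 * ((n : ℝ) - 5)) * X * derivative (P n)
          + 4 * (X ^ 2 - 1) * derivative (derivative (P n)) := by
  suffices H : ∀ n : ℕ, 4 ≤ n →
      (0 : Polynomial ℝ) =
        Polynomial.C (4 * ((n : ℝ) - 5)) * derivative (P (n - 2))
          + Polynomial.C (((n : ℝ) - 4) ^ 2) * P n
          - Polynomial.C (4 * ((n : ℝ) - 5)) * X * derivative (P n)
          + 4 * (X ^ 2 - 1) * derivative (derivative (P n)) by
    intro n hn _ _; exact H n (by omega)
  have h4 := hrec 4 (by norm_num)
  have h5 := hrec 5 (by norm_num)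
  have h6 := hrec 6 (by norm_num)
  have h7 := hrec 7 (by norm_num)
  norm_num [h0, h1, h2, h3] at h4 h5 h6 h7
  norm_num [h4, h5] at h6 h7
  -- now h4 : P 4 = 1, h5 : P 5 = 0, h6 : C 10 * P 6 = C 8 * X, h7 : P 7 = 0
  intro n
  induction n using Nat.strong_induction_on with
  | _ n ih =>
    intro hn
    rcases Nat.lt_or_ge n 8 with hlt | hge
    · interval_cases n
      · -- n = 4
        norm_num [h2, h4]
      · -- n = 5
        norm_num [h3, h5]
      · -- n = 6
        have h6d : Polynomial.C (10:ℝ) * derivative (P 6) = Polynomial.C 8 := by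
          have := congrArg derivative h6
          simpa using this
        have h6dd : Polynomial.C (10:ℝ) * derivative (derivative (P 6)) = 0 := by
          have := congrArg derivative h6d
          simpa using this
        have hc : (Polynomial.C (10:ℝ)) ≠ 0 := by simp
        apply mul_left_cancel₀ hc
        rw [mul_zero]
        show (0 : Polynomial ℝ) = _
        rw [show (6:ℕ) - 2 = 4 from rfl, h4, derivative_one]
        simp only [Nat.cast_ofNat, map_sub, map_add, map_mul, map_pow, map_ofNat,
          map_one] at h6 h6d h6dd ⊢
        linear_combination (-4 : Polynomial ℝ) * h6 + (4*X) * h6d - (4*(X^2-1)) * h6dd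
      · -- n = 7
        norm_num [h5, h7]
    · -- step : n = m + 8
      obtain ⟨m, rfl⟩ : ∃ m, n = m + 8 := ⟨n - 8, by omega⟩
      have hL2 := ih (m+6) (by omega) (by omega)
      have hL4 := ih (m+4) (by omega) (by omega)
      have e1 : m + 8 - 2 = m + 6 := by omega
      have e2 : m + 8 - 4 = m + 4 := by omega
      have e3 : m + 6 - 2 = m + 4 := by omega
      have e4 : m + 6 - 4 = m + 2 := by omega
      have e5 : m + 4 - 2 = m + 2 := by omega
      rw [e3] at hL2
      rw [e5] at hL4
      rw [e1]
      have hA := hrec (m+8) (by omega)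
      have hB := hrec (m+6) (by omega)
      rw [e1, e2] at hA
      rw [e3, e4] at hB
      have hA' := congrArg derivative hA
      have hB' := congrArg derivative hB
      simp only [derivative_mul, derivative_sub, derivative_add, derivative_C, derivative_X,
        zero_mul, zero_add, mul_one] at hA' hB'
      have hA'' := congrArg derivative hA'
      simp only [derivative_mul, derivative_sub, derivative_add, derivative_C, derivative_X,
        zero_mul, zero_add, mul_one] at hA''
      have hc : (Polynomial.C ((2*(m:ℝ)+14)*(2*(m:ℝ)+10))) ≠ 0 := by
        rw [ne_eq, Polynomial.C_eq_zero]
        positivity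
      apply mul_left_cancel₀ hc
      rw [mul_zero]
      push_cast at hA hA' hA'' hB' hL2 hL4 ⊢
      simp only [map_sub, map_add, map_mul, map_pow, map_ofNat, map_one] at hA hA' hA'' hB' hL2 hL4 ⊢
      set N : Polynomial ℝ := Polynomial.C (m:ℝ) with hN
      linear_combination (4*(N+4)*(2*N+10)*X) * hL2 + (-4*(N+1)*(N+5)) * hL4
        + (-((N+4)^2*(2*N+10))) * hA + (4*(N+3)*(2*N+10)*X) * hA'
        + (-4*(2*N+10)*(X^2-1)) * hA'' + (-8*(N+1)*(N+5)) * hB'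
end

section
/- Write P_k = P_{-4,k}. For every integer n ≥ 8 with n ≠ 9 and n ≠ 11 one has, as an identity in ℝ[c], 0 = −(n−5)(n−2)²·P_{n−2} + c(n−4)²(n−1)·P_n − (c² − 1)(3n² − 12n − 16)·P_n' + 24c(c² − 1)·P_n'' + 4(c² − 1)²·P_n'''. -/
open Polynomial

set_option maxHeartbeats 4000000 in
theorem stmt_19 (P : ℕ → Polynomial ℝ)
    (h0 : P 0 = 1) (h1 : P 1 = 0) (h2 : P 2 = 0) (h3 : P 3 = 0)
    (hrec : ∀ k : ℕ, 4 ≤ k →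
      Polynomial.C (2 * (k : ℝ) - 2) * P k =
        Polynomial.C (4 * ((k : ℝ) - 4)) * X * P (k - 2)
          - Polynomial.C (2 * ((k : ℝ) - 7)) * P (k - 4)) :
    ∀ n : ℕ, 8 ≤ n → n ≠ 9 → n ≠ 11 →
      (0 : Polynomial ℝ) =
        -(Polynomial.C (((n : ℝ) - 5) * ((n : ℝ) - 2) ^ 2)) * P (n - 2)
          + X * Polynomial.C (((n : ℝ) - 4) ^ 2 * ((n : ℝ) - 1)) * P n
          - (X ^ 2 - 1) * Polynomial.C (3 * (n : ℝ) ^ 2 - 12 * (n : ℝ) - 16) * derivative (P n)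
          + 24 * X * (X ^ 2 - 1) * derivative (derivative (P n))
          + 4 * (X ^ 2 - 1) ^ 2 * derivative (derivative (derivative (P n))) := by
  -- all odd-index polynomials vanish
  have hodd : ∀ k : ℕ, P (2 * k + 1) = 0 := by
    intro k
    induction k using Nat.strong_induction_on with
    | _ k IH =>
      match k, IH with
      | 0, _ => simpa using h1
      | 1, _ => simpa using h3
      | (t+2), IH =>
        have hA : P (2*t+3) = 0 := by
          have h := IH (t+1) (by omega)
          rw [show 2*(t+1)+1 = 2*t+3 by omega] at h
          exact h
        have hB : P (2*t+1) = 0 := IH t (by omega)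
        have h := hrec (2*(t+2)+1) (by omega)
        rw [show 2*(t+2)+1-2 = 2*t+3 by omega, show 2*(t+2)+1-4 = 2*t+1 by omega,
          hA, hB] at h
        have h' : Polynomial.C (2 * ((2*(t+2)+1 : ℕ) : ℝ) - 2) * P (2*(t+2)+1) = 0 := by
          rw [h]; ring
        have hc : (2 * ((2*(t+2)+1 : ℕ) : ℝ) - 2) ≠ 0 := by
          have he : (2 * ((2*(t+2)+1 : ℕ) : ℝ) - 2) = 4*(t:ℝ)+8 := by push_cast; ring
          rw [he]; positivity
        rcases mul_eq_zero.mp h' with hz | hz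
        · exact absurd (Polynomial.C_eq_zero.mp hz) hc
        · exact hz
  have o7 : P 7 = 0 := by have := hodd 3; norm_num at this; exact this
  have o9 : P 9 = 0 := by have := hodd 4; norm_num at this; exact this
  have o11 : P 11 = 0 := by have := hodd 5; norm_num at this; exact this
  have o13 : P 13 = 0 := by have := hodd 6; norm_num at this; exact this
  -- explicit low-degree polynomials
  have hP4 : P 4 = 1 := by
    have h := hrec 4 (by norm_num)
    rw [show (4:ℕ)-2 = 2 by norm_num, show (4:ℕ)-4 = 0 by norm_num, h2, h0] at h
    apply Polynomial.funext; intro x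
    have hx := congrArg (Polynomial.eval x) h
    simp [Polynomial.eval_add, Polynomial.eval_sub, Polynomial.eval_neg, Polynomial.eval_mul, Polynomial.eval_pow, Polynomial.eval_C, Polynomial.eval_X, Polynomial.eval_ofNat, Polynomial.eval_one, Polynomial.eval_zero, Polynomial.eval_natCast] at hx ⊢
    push_cast at hx
    linear_combination hx / 6
  have hP6 : P 6 = Polynomial.C (4/5 : ℝ) * X := by
    have h := hrec 6 (by norm_num)
    rw [show (6:ℕ)-2 = 4 by norm_num, show (6:ℕ)-4 = 2 by norm_num, hP4, h2] at h
    apply Polynomial.funext; intro x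
    have hx := congrArg (Polynomial.eval x) h
    simp [Polynomial.eval_add, Polynomial.eval_sub, Polynomial.eval_neg, Polynomial.eval_mul, Polynomial.eval_pow, Polynomial.eval_C, Polynomial.eval_X, Polynomial.eval_ofNat, Polynomial.eval_one, Polynomial.eval_zero, Polynomial.eval_natCast] at hx ⊢
    push_cast at hx
    linear_combination hx / 10
  have hP8 : P 8 = Polynomial.C (32/35 : ℝ) * X ^ 2 - Polynomial.C (1/7 : ℝ) := by
    have h := hrec 8 (by norm_num)
    rw [show (8:ℕ)-2 = 6 by norm_num, show (8:ℕ)-4 = 4 by norm_num, hP6, hP4] at h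
    apply Polynomial.funext; intro x
    have hx := congrArg (Polynomial.eval x) h
    simp [Polynomial.eval_add, Polynomial.eval_sub, Polynomial.eval_neg, Polynomial.eval_mul, Polynomial.eval_pow, Polynomial.eval_C, Polynomial.eval_X, Polynomial.eval_ofNat, Polynomial.eval_one, Polynomial.eval_zero, Polynomial.eval_natCast] at hx ⊢
    push_cast at hx
    linear_combination hx / 14
  have hP10 : P 10 = Polynomial.C (128/105 : ℝ) * X ^ 3 - Polynomial.C (16/35 : ℝ) * X := by
    have h := hrec 10 (by norm_num)
    rw [show (10:ℕ)-2 = 8 by norm_num, show (10:ℕ)-4 = 6 by norm_num, hP8, hP6] at h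
    apply Polynomial.funext; intro x
    have hx := congrArg (Polynomial.eval x) h
    simp [Polynomial.eval_add, Polynomial.eval_sub, Polynomial.eval_neg, Polynomial.eval_mul, Polynomial.eval_pow, Polynomial.eval_C, Polynomial.eval_X, Polynomial.eval_ofNat, Polynomial.eval_one, Polynomial.eval_zero, Polynomial.eval_natCast] at hx ⊢
    push_cast at hx
    linear_combination hx / 18
  have hP12 : P 12 = Polynomial.C (2048/1155 : ℝ) * X ^ 4 - Polynomial.C (416/385 : ℝ) * X ^ 2
      + Polynomial.C (5/77 : ℝ) := by
    have h := hrec 12 (by norm_num)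
    rw [show (12:ℕ)-2 = 10 by norm_num, show (12:ℕ)-4 = 8 by norm_num, hP10, hP8] at h
    apply Polynomial.funext; intro x
    have hx := congrArg (Polynomial.eval x) h
    simp [Polynomial.eval_add, Polynomial.eval_sub, Polynomial.eval_neg, Polynomial.eval_mul, Polynomial.eval_pow, Polynomial.eval_C, Polynomial.eval_X, Polynomial.eval_ofNat, Polynomial.eval_one, Polynomial.eval_zero, Polynomial.eval_natCast] at hx ⊢
    push_cast at hx
    linear_combination hx / 22
  -- the master statement, for all n = m + 8
  have key : ∀ m : ℕ, (0 : Polynomial ℝ) =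
      -(Polynomial.C ((((m+8 : ℕ) : ℝ) - 5) * (((m+8 : ℕ) : ℝ) - 2) ^ 2)) * P (m+6)
          + X * Polynomial.C ((((m+8 : ℕ) : ℝ) - 4) ^ 2 * (((m+8 : ℕ) : ℝ) - 1)) * P (m+8)
          - (X ^ 2 - 1) * Polynomial.C (3 * ((m+8 : ℕ) : ℝ) ^ 2 - 12 * ((m+8 : ℕ) : ℝ) - 16) * derivative (P (m+8))
          + 24 * X * (X ^ 2 - 1) * derivative (derivative (P (m+8)))
          + 4 * (X ^ 2 - 1) ^ 2 * derivative (derivative (derivative (P (m+8)))) := by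
    intro m
    induction m using Nat.strong_induction_on with
    | _ m IH =>
      by_cases hm : m < 6
      · interval_cases m
        · -- n = 8
          norm_num only
          rw [hP6, hP8]
          apply Polynomial.funext; intro x
          simp [derivative_add, derivative_sub, derivative_neg, derivative_mul, derivative_pow, derivative_C, derivative_X, derivative_ofNat, derivative_one, derivative_zero, Polynomial.eval_add, Polynomial.eval_sub, Polynomial.eval_neg, Polynomial.eval_mul, Polynomial.eval_pow, Polynomial.eval_C, Polynomial.eval_X, Polynomial.eval_ofNat, Polynomial.eval_one, Polynomial.eval_zero, Polynomial.eval_natCast]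
          ring
        · -- n = 9
          norm_num only
          rw [o7, o9]
          simp
        · -- n = 10
          norm_num only
          rw [hP8, hP10]
          apply Polynomial.funext; intro x
          simp [derivative_add, derivative_sub, derivative_neg, derivative_mul, derivative_pow, derivative_C, derivative_X, derivative_ofNat, derivative_one, derivative_zero, Polynomial.eval_add, Polynomial.eval_sub, Polynomial.eval_neg, Polynomial.eval_mul, Polynomial.eval_pow, Polynomial.eval_C, Polynomial.eval_X, Polynomial.eval_ofNat, Polynomial.eval_one, Polynomial.eval_zero, Polynomial.eval_natCast]
          ring
        · -- n = 11
          norm_num only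
          rw [o9, o11]
          simp
        · -- n = 12
          norm_num only
          rw [hP10, hP12]
          apply Polynomial.funext; intro x
          simp [derivative_add, derivative_sub, derivative_neg, derivative_mul, derivative_pow, derivative_C, derivative_X, derivative_ofNat, derivative_one, derivative_zero, Polynomial.eval_add, Polynomial.eval_sub, Polynomial.eval_neg, Polynomial.eval_mul, Polynomial.eval_pow, Polynomial.eval_C, Polynomial.eval_X, Polynomial.eval_ofNat, Polynomial.eval_one, Polynomial.eval_zero, Polynomial.eval_natCast]
          ring
        · -- n = 13
          norm_num only
          rw [o11, o13]
          simp
      · -- inductive step, m = 6 + j, n = j + 14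
        obtain ⟨j, rfl⟩ := Nat.exists_eq_add_of_le (Nat.le_of_not_lt hm)
        rw [show 6+j+6 = j+12 by omega, show 6+j+8 = j+14 by omega]
        -- recurrence relations
        have hR0p := hrec (j+14) (by omega)
        rw [show j+14-2 = j+12 by omega, show j+14-4 = j+10 by omega] at hR0p
        have hR2p := hrec (j+12) (by omega)
        rw [show j+12-2 = j+10 by omega, show j+12-4 = j+8 by omega] at hR2p
        have hR4p := hrec (j+10) (by omega)
        rw [show j+10-2 = j+8 by omega, show j+10-4 = j+6 by omega] at hR4p
        have hR0d1p := congrArg derivative hR0p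
        simp only [derivative_add, derivative_sub, derivative_neg, derivative_mul, derivative_pow, derivative_C, derivative_X, derivative_ofNat, derivative_one, derivative_zero] at hR0d1p
        have hR0d2p := congrArg derivative hR0d1p
        simp only [derivative_add, derivative_sub, derivative_neg, derivative_mul, derivative_pow, derivative_C, derivative_X, derivative_ofNat, derivative_one, derivative_zero] at hR0d2p
        have hR0d3p := congrArg derivative hR0d2p
        simp only [derivative_add, derivative_sub, derivative_neg, derivative_mul, derivative_pow, derivative_C, derivative_X, derivative_ofNat, derivative_one, derivative_zero] at hR0d3p
        have hR2d1p := congrArg derivative hR2p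
        simp only [derivative_add, derivative_sub, derivative_neg, derivative_mul, derivative_pow, derivative_C, derivative_X, derivative_ofNat, derivative_one, derivative_zero] at hR2d1p
        have hR2d2p := congrArg derivative hR2d1p
        simp only [derivative_add, derivative_sub, derivative_neg, derivative_mul, derivative_pow, derivative_C, derivative_X, derivative_ofNat, derivative_one, derivative_zero] at hR2d2p
        have hR2d3p := congrArg derivative hR2d2p
        simp only [derivative_add, derivative_sub, derivative_neg, derivative_mul, derivative_pow, derivative_C, derivative_X, derivative_ofNat, derivative_one, derivative_zero] at hR2d3p
        have hR2d4p := congrArg derivative hR2d3p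
        simp only [derivative_add, derivative_sub, derivative_neg, derivative_mul, derivative_pow, derivative_C, derivative_X, derivative_ofNat, derivative_one, derivative_zero] at hR2d4p
        have hR4d1p := congrArg derivative hR4p
        simp only [derivative_add, derivative_sub, derivative_neg, derivative_mul, derivative_pow, derivative_C, derivative_X, derivative_ofNat, derivative_one, derivative_zero] at hR4d1p
        -- induction hypotheses
        have hE2p := IH (j+4) (by omega)
        rw [show j+4+6 = j+10 by omega, show j+4+8 = j+12 by omega] at hE2p
        have hE4p := IH (j+2) (by omega)
        rw [show j+2+6 = j+8 by omega, show j+2+8 = j+10 by omega] at hE4p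
        have hE6p := IH j (by omega)
        have hE2dp := congrArg derivative hE2p
        simp only [derivative_add, derivative_sub, derivative_neg, derivative_mul, derivative_pow, derivative_C, derivative_X, derivative_ofNat, derivative_one, derivative_zero] at hE2dp
        have hE4dp := congrArg derivative hE4p
        simp only [derivative_add, derivative_sub, derivative_neg, derivative_mul, derivative_pow, derivative_C, derivative_X, derivative_ofNat, derivative_one, derivative_zero] at hE4dp
        have hE6dp := congrArg derivative hE6p
        simp only [derivative_add, derivative_sub, derivative_neg, derivative_mul, derivative_pow, derivative_C, derivative_X, derivative_ofNat, derivative_one, derivative_zero] at hE6dp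
        have hDne : (Polynomial.C (2*((j:ℝ)+13)*((j:ℝ)+11)*((j:ℝ)+8)) : ℝ[X]) ≠ 0 := by
          rw [Ne, Polynomial.C_eq_zero]
          positivity
        symm
        apply mul_right_injective₀ hDne
        apply Polynomial.funext; intro x
        have hR0x := congrArg (Polynomial.eval x) hR0p
        have hR0d1x := congrArg (Polynomial.eval x) hR0d1p
        have hR0d2x := congrArg (Polynomial.eval x) hR0d2p
        have hR0d3x := congrArg (Polynomial.eval x) hR0d3p
        have hR2x := congrArg (Polynomial.eval x) hR2p
        have hR2d1x := congrArg (Polynomial.eval x) hR2d1p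
        have hR2d2x := congrArg (Polynomial.eval x) hR2d2p
        have hR2d3x := congrArg (Polynomial.eval x) hR2d3p
        have hR2d4x := congrArg (Polynomial.eval x) hR2d4p
        have hR4x := congrArg (Polynomial.eval x) hR4p
        have hR4d1x := congrArg (Polynomial.eval x) hR4d1p
        have hE2x := congrArg (Polynomial.eval x) hE2p
        have hE2dx := congrArg (Polynomial.eval x) hE2dp
        have hE4x := congrArg (Polynomial.eval x) hE4p
        have hE4dx := congrArg (Polynomial.eval x) hE4dp
        have hE6x := congrArg (Polynomial.eval x) hE6p
        have hE6dx := congrArg (Polynomial.eval x) hE6dp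
        simp only [Polynomial.eval_add, Polynomial.eval_sub, Polynomial.eval_neg, Polynomial.eval_mul, Polynomial.eval_pow, Polynomial.eval_C, Polynomial.eval_X, Polynomial.eval_ofNat, Polynomial.eval_one, Polynomial.eval_zero, Polynomial.eval_natCast] at hR0x hR0d1x hR0d2x hR0d3x hR2x hR2d1x hR2d2x hR2d3x hR2d4x hR4x hR4d1x hE2x hE2dx hE4x hE4dx hE6x hE6dx ⊢
        push_cast at hR0x hR0d1x hR0d2x hR0d3x hR2x hR2d1x hR2d2x hR2d3x hR2d4x hR4x hR4d1x hE2x hE2dx hE4x hE4dx hE6x hE6dx ⊢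
        set jj := (j : ℝ) with hjj
        linear_combination (norm := ring1)
          ((114400 + 56380*jj + 11044*jj^2 + 1075*jj^3 + 52*jj^4 + 1*jj^5)*x) * hR0x
          + ((35552 + 14012*jj + 2036*jj^2 + 129*jj^3 + 3*jj^4) + (-35552 + -14012*jj + -2036*jj^2 + -129*jj^3 + -3*jj^4)*x^2) * hR0d1x
          + ((-2112 + -456*jj + -24*jj^2)*x + (2112 + 456*jj + 24*jj^2)*x^3) * hR0d2x
          + ((352 + 76*jj + 4*jj^2) + (-704 + -152*jj + -8*jj^2)*x^2 + (352 + 76*jj + 4*jj^2)*x^4) * hR0d3x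
          + ((-77184 + -41696*jj + -8918*jj^2 + -942*jj^3 + -49*jj^4 + -1*jj^5) + (-25600 + -17280*jj + -4592*jj^2 + -602*jj^3 + -39*jj^4 + -1*jj^5)*x^2) * hR2x
          + ((-12640 + -6984*jj + -1412*jj^2 + -124*jj^3 + -4*jj^4)*x + (12640 + 6984*jj + 1412*jj^2 + 124*jj^3 + 4*jj^4)*x^3) * hR2d1x
          + ((-560 + -416*jj + -66*jj^2 + -3*jj^3) + (2800 + 1240*jj + 156*jj^2 + 6*jj^3)*x^2 + (-2240 + -824*jj + -90*jj^2 + -3*jj^3)*x^4) * hR2d2x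
          + ((40 + -36*jj + -4*jj^2)*x + (-80 + 72*jj + 8*jj^2)*x^3 + (40 + -36*jj + -4*jj^2)*x^5) * hR2d3x
          + ((-40 + -4*jj) + (120 + 12*jj)*x^2 + (-120 + -12*jj)*x^4 + (40 + 4*jj)*x^6) * hR2d4x
          + ((16200 + 12060*jj + 3534*jj^2 + 509*jj^3 + 36*jj^4 + 1*jj^5)*x) * hR4x
          + ((1800 + 1140*jj + 266*jj^2 + 27*jj^3 + 1*jj^4) + (-1800 + -1140*jj + -266*jj^2 + -27*jj^3 + -1*jj^4)*x^2) * hR4d1x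
          + ((-5500 + -1710*jj + -176*jj^2 + -6*jj^3)*x) * hE2x
          + ((-220 + -42*jj + -2*jj^2) + (220 + 42*jj + 2*jj^2)*x^2) * hE2dx
          + ((2512 + 730*jj + 68*jj^2 + 2*jj^3) + (1600 + 680*jj + 92*jj^2 + 4*jj^3)*x^2) * hE4x
          + ((320 + 72*jj + 4*jj^2)*x + (-320 + -72*jj + -4*jj^2)*x^3) * hE4dx
          + ((-900 + -370*jj + -48*jj^2 + -2*jj^3)*x) * hE6x
          + ((-100 + -30*jj + -2*jj^2) + (100 + 30*jj + 2*jj^2)*x^2) * hE6dx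
  -- conclude
  intro n hn _ _
  obtain ⟨m, rfl⟩ : ∃ m, n = m + 8 := ⟨n - 8, by omega⟩
  have k := key m
  rw [show m + 8 - 2 = m + 6 by omega]
  exact k
end
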